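/- arXiv:math/0202007 — 3 statements merged into one kernel-verified Lean document; each statement's English description precedes it below -/
import Mathlib

section
/- For every k ≥ 1, the generating function for the number of permutations of length n avoiding both 213 and 231 and containing the increasing pattern (1,2,…,k) exactly once is x^k/(1−x)^{k−1}; the same holds for the decreasing pattern (k, k−1, …, 1). -/
/-- An occurrence of the pattern `τ` (of length `k`) in the permutation `π` (of length `n`)
is a strictly increasing map of positions along which `π` is order-isomorphic to `τ`. -/
def IsOcc {k n : ℕ} (τ : Fin k → Fin k) (π : Fin n → Fin n) (f : Fin k → Fin n) : Prop :=
  StrictMono f ∧ ∀ i j : Fin k, τ i < τ j ↔ π (f i) < π (f j)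

/-- `π` avoids the pattern `τ`. -/
def Avoids {k n : ℕ} (τ : Fin k → Fin k) (π : Fin n → Fin n) : Prop :=
  ¬ ∃ f, IsOcc τ π f

/-- `π` contains exactly one occurrence of the pattern `τ`. -/
def ContainsOnce {k n : ℕ} (τ : Fin k → Fin k) (π : Fin n → Fin n) : Prop :=
  ∃! f, IsOcc τ π f

def p123 : Fin 3 → Fin 3 := ![0, 1, 2]
def p132 : Fin 3 → Fin 3 := ![0, 2, 1]
def p213 : Fin 3 → Fin 3 := ![1, 0, 2]
def p231 : Fin 3 → Fin 3 := ![1, 2, 0]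
def p312 : Fin 3 → Fin 3 := ![2, 0, 1]
def p321 : Fin 3 → Fin 3 := ![2, 1, 0]

namespace Stmt14

open Finset

variable {n k : ℕ}

/-- `a` is smaller than every later entry. -/
def Lpos (π : Fin n → Fin n) (a : Fin n) : Prop := ∀ b, a < b → π a < π b

/-- `a` is bigger than every later entry. -/
def Hpos (π : Fin n → Fin n) (a : Fin n) : Prop := ∀ b, a < b → π b < π a

def Ext (π : Fin n → Fin n) : Prop := ∀ a, Lpos π a ∨ Hpos π a

instance (π : Fin n → Fin n) (a : Fin n) : Decidable (Lpos π a) := by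
  unfold Lpos; infer_instance

def Lset (π : Fin n → Fin n) : Finset (Fin n) := Finset.univ.filter (fun a => Lpos π a)

lemma mem_Lset {π : Fin n → Fin n} {a : Fin n} : a ∈ Lset π ↔ Lpos π a := by
  simp [Lset]

lemma strictMono3 {a b c : Fin n} (h1 : a < b) (h2 : b < c) : StrictMono ![a, b, c] := by
  have h3 : a < c := h1.trans h2
  intro i j hij
  fin_cases i <;> fin_cases j <;>
    simp_all [Matrix.cons_val_zero, Matrix.cons_val_one] <;> omega

lemma avoids_iff {π : Fin n → Fin n} (hinj : Function.Injective π) :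
    (Avoids p213 π ∧ Avoids p231 π) ↔ Ext π := by
  constructor
  · rintro ⟨h213, h231⟩ a
    by_contra hcon
    push_neg at hcon
    obtain ⟨hL, hH⟩ := hcon
    simp only [Lpos, Hpos, not_forall] at hL hH
    obtain ⟨c, hac, hc⟩ := hL
    obtain ⟨b, hab, hb⟩ := hH
    push_neg at hb
    have hca : π c < π a :=
      lt_of_le_of_ne (not_lt.mp hc) (fun h => (ne_of_lt hac) (hinj h).symm)
    have hab' : π a < π b :=
      lt_of_le_of_ne hb (fun h => (ne_of_lt hab) (hinj h.symm).symm)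
    rcases lt_trichotomy b c with hbc | hbc | hbc
    · -- positions a < b < c, values π c < π a < π b : pattern 231
      apply h231
      refine ⟨![a, b, c], strictMono3 hab hbc, ?_⟩
      intro i j
      have h1 : π a < π b := hab'
      have h2 : π c < π a := hca
      have h3 : π c < π b := h2.trans h1
      fin_cases i <;> fin_cases j <;>
        simp [p231, Matrix.cons_val_zero, Matrix.cons_val_one] <;>
        first
          | exact lt_irrefl _
          | exact h1 | exact h2 | exact h3
          | exact h1.le | exact h2.le | exact h3.le
    · exact absurd (hbc ▸ hab') (asymm hca)
    · -- positions a < c < b, values π c < π a < π b : pattern 213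
      apply h213
      refine ⟨![a, c, b], strictMono3 hac hbc, ?_⟩
      intro i j
      have h1 : π a < π b := hab'
      have h2 : π c < π a := hca
      have h3 : π c < π b := h2.trans h1
      fin_cases i <;> fin_cases j <;>
        simp [p213, Matrix.cons_val_zero, Matrix.cons_val_one] <;>
        first
          | exact lt_irrefl _
          | exact h1 | exact h2 | exact h3
          | exact h1.le | exact h2.le | exact h3.le
  · rintro hext
    constructor
    · rintro ⟨f, hsm, hiso⟩
      have h10 : π (f 1) < π (f 0) := by
        have := (hiso 1 0).mp (by decide)
        simpa [p213] using this
      have h02 : π (f 0) < π (f 2) := by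
        have := (hiso 0 2).mp (by decide)
        simpa [p213] using this
      rcases hext (f 0) with hl | hh
      · exact absurd (hl (f 1) (hsm (by decide))) (asymm h10)
      · exact absurd (hh (f 2) (hsm (by decide))) (asymm h02)
    · rintro ⟨f, hsm, hiso⟩
      have h01 : π (f 0) < π (f 1) := by
        have := (hiso 0 1).mp (by decide)
        simpa [p231] using this
      have h20 : π (f 2) < π (f 0) := by
        have := (hiso 2 0).mp (by decide)
        simpa [p231] using this
      rcases hext (f 0) with hl | hh
      · exact absurd (hl (f 2) (hsm (by decide))) (asymm h20)
      · exact absurd (hh (f 1) (hsm (by decide))) (asymm h01)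


/-- Occurrences of the identity pattern in an `Ext` permutation. -/
lemma isOcc_id_iff {π : Fin n → Fin n} (hext : Ext π) (f : Fin k → Fin n) :
    IsOcc (fun i : Fin k => i) π f ↔
      StrictMono f ∧ ∀ i : Fin k, (i : ℕ) + 1 < k → Lpos π (f i) := by
  constructor
  · rintro ⟨hsm, hiso⟩
    refine ⟨hsm, fun i hi => ?_⟩
    have hij : i < (⟨(i : ℕ) + 1, hi⟩ : Fin k) := by
      simp [Fin.lt_def]
    have hlt : π (f i) < π (f ⟨(i : ℕ) + 1, hi⟩) := (hiso _ _).mp hij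
    rcases hext (f i) with hl | hh
    · exact hl
    · exact absurd (hh _ (hsm hij)) (asymm hlt)
  · rintro ⟨hsm, hL⟩
    refine ⟨hsm, fun i j => ?_⟩
    rcases lt_trichotomy i j with hij | hij | hij
    · constructor
      · intro _
        exact hL i (by omega) _ (hsm hij)
      · intro _; exact hij
    · subst hij; simp
    · have : π (f j) < π (f i) := hL j (by omega) _ (hsm hij)
      constructor
      · intro h; exact absurd h (asymm hij)
      · intro h; exact absurd h (asymm this)

def cnt (S : Finset (Fin n)) (a : Fin n) : ℕ := #(S.filter (· < a))

lemma cnt_le (S : Finset (Fin n)) (a : Fin n) : cnt S a ≤ (a : ℕ) := by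
  have h : S.filter (· < a) ⊆ Finset.Iio a := by
    intro x hx
    simp only [mem_filter] at hx
    exact Finset.mem_Iio.mpr hx.2
  calc cnt S a ≤ #(Finset.Iio a) := Finset.card_le_card h
    _ = (a : ℕ) := Fin.card_Iio a

lemma cnt_lt_of_mem_lt {S : Finset (Fin n)} {a b : Fin n} (ha : a ∈ S) (hab : a < b) :
    cnt S a < cnt S b := by
  apply Finset.card_lt_card
  rw [Finset.ssubset_iff_of_subset]
  · exact ⟨a, by simp [ha, hab], by simp⟩
  · intro x hx
    simp only [mem_filter] at hx ⊢
    exact ⟨hx.1, hx.2.trans hab⟩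

lemma cnt_add_cnt_le {S : Finset (Fin n)} {a b : Fin n} (hab : a < b)
    (ha : a ∈ S) (hb : b ∉ S) : cnt S a + cnt Sᶜ b ≤ n - 2 := by
  have hdisj : Disjoint (S.filter (· < a)) (Sᶜ.filter (· < b)) :=
    Finset.disjoint_filter_filter (disjoint_compl_right)
  have hsub : S.filter (· < a) ∪ Sᶜ.filter (· < b) ⊆ Finset.univ \ {a, b} := by
    intro x hx
    simp only [Finset.mem_union, mem_filter, Finset.mem_compl] at hx
    simp only [Finset.mem_sdiff, Finset.mem_univ, Finset.mem_insert, Finset.mem_singleton,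
      true_and]
    rcases hx with ⟨hxS, hxa⟩ | ⟨hxS, hxb⟩
    · exact not_or.mpr ⟨ne_of_lt hxa, ne_of_lt (hxa.trans hab)⟩
    · exact not_or.mpr ⟨fun h => hxS (h ▸ ha), ne_of_lt hxb⟩
  have hcard : #(Finset.univ \ ({a, b} : Finset (Fin n))) = n - 2 := by
    rw [Finset.card_sdiff_of_subset (Finset.subset_univ _), Finset.card_pair (ne_of_lt hab)]
    simp
  calc cnt S a + cnt Sᶜ b = #(S.filter (· < a) ∪ Sᶜ.filter (· < b)) :=
        (Finset.card_union_of_disjoint hdisj).symm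
    _ ≤ n - 2 := hcard ▸ Finset.card_le_card hsub

lemma cnt_add_cnt_le' {S : Finset (Fin n)} {a b : Fin n} (hab : a < b)
    (ha : a ∉ S) (hb : b ∈ S) : cnt Sᶜ a + cnt S b ≤ n - 2 := by
  have hdisj : Disjoint (Sᶜ.filter (· < a)) (S.filter (· < b)) :=
    Finset.disjoint_filter_filter (disjoint_compl_left)
  have hsub : Sᶜ.filter (· < a) ∪ S.filter (· < b) ⊆ Finset.univ \ {a, b} := by
    intro x hx
    simp only [Finset.mem_union, mem_filter, Finset.mem_compl] at hx
    simp only [Finset.mem_sdiff, Finset.mem_univ, Finset.mem_insert, Finset.mem_singleton,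
      true_and]
    rcases hx with ⟨hxS, hxa⟩ | ⟨hxS, hxb⟩
    · exact not_or.mpr ⟨ne_of_lt hxa, ne_of_lt (hxa.trans hab)⟩
    · exact not_or.mpr ⟨fun h => ha (h ▸ hxS), ne_of_lt hxb⟩
  have hcard : #(Finset.univ \ ({a, b} : Finset (Fin n))) = n - 2 := by
    rw [Finset.card_sdiff_of_subset (Finset.subset_univ _), Finset.card_pair (ne_of_lt hab)]
    simp
  calc cnt Sᶜ a + cnt S b = #(Sᶜ.filter (· < a) ∪ S.filter (· < b)) :=
        (Finset.card_union_of_disjoint hdisj).symm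
    _ ≤ n - 2 := hcard ▸ Finset.card_le_card hsub

/-- The unique Ext permutation whose low positions are `S` (together with the last position). -/
def permOf (S : Finset (Fin n)) : Fin n → Fin n := fun a =>
  if a ∈ S then ⟨cnt S a, lt_of_le_of_lt (cnt_le S a) a.isLt⟩
  else ⟨n - 1 - cnt Sᶜ a, by have := a.isLt; omega⟩

lemma permOf_lt_of_mem {S : Finset (Fin n)} {a b : Fin n} (ha : a ∈ S) (hab : a < b) :
    permOf S a < permOf S b := by
  have hn2 : 2 ≤ n := by
    have := b.isLt
    have : (a : ℕ) < (b : ℕ) := hab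
    omega
  by_cases hb : b ∈ S
  · simp only [permOf, if_pos ha, if_pos hb, Fin.mk_lt_mk]
    exact cnt_lt_of_mem_lt ha hab
  · simp only [permOf, if_pos ha, if_neg hb, Fin.mk_lt_mk]
    have := cnt_add_cnt_le hab ha hb
    omega

lemma permOf_gt_of_notMem {S : Finset (Fin n)} {a b : Fin n} (ha : a ∉ S) (hab : a < b) :
    permOf S b < permOf S a := by
  have hn2 : 2 ≤ n := by
    have := b.isLt
    have : (a : ℕ) < (b : ℕ) := hab
    omega
  by_cases hb : b ∈ S
  · simp only [permOf, if_pos hb, if_neg ha, Fin.mk_lt_mk]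
    have := cnt_add_cnt_le' hab ha hb
    omega
  · simp only [permOf, if_neg ha, if_neg hb, Fin.mk_lt_mk]
    have h1 : cnt Sᶜ a < cnt Sᶜ b := cnt_lt_of_mem_lt (Finset.mem_compl.mpr ha) hab
    have h2 : cnt Sᶜ b ≤ (b : ℕ) := cnt_le _ _
    have := b.isLt
    omega

lemma permOf_bijective (S : Finset (Fin n)) : Function.Bijective (permOf S) := by
  rw [Finite.injective_iff_bijective.symm]
  intro a b hab
  by_contra hne
  rcases lt_or_gt_of_ne hne with h | h
  · by_cases ha : a ∈ S
    · exact absurd hab (ne_of_lt (permOf_lt_of_mem ha h))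
    · exact absurd hab.symm (ne_of_lt (permOf_gt_of_notMem ha h))
  · by_cases hb : b ∈ S
    · exact absurd hab.symm (ne_of_lt (permOf_lt_of_mem hb h))
    · exact absurd hab (ne_of_lt (permOf_gt_of_notMem hb h))

lemma permOf_ext (S : Finset (Fin n)) : Ext (permOf S) := by
  intro a
  by_cases ha : a ∈ S
  · exact Or.inl (fun b hb => permOf_lt_of_mem ha hb)
  · exact Or.inr (fun b hb => permOf_gt_of_notMem ha hb)

lemma lpos_permOf {S : Finset (Fin n)} {a : Fin n} :
    Lpos (permOf S) a ↔ (a ∈ S ∨ (a : ℕ) = n - 1) := by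
  constructor
  · intro hl
    by_contra hcon
    push_neg at hcon
    obtain ⟨haS, halast⟩ := hcon
    have hlt : (a : ℕ) < n - 1 := by have := a.isLt; omega
    set b : Fin n := ⟨(a : ℕ) + 1, by omega⟩ with hb
    have hab : a < b := by simp [hb, Fin.lt_def]
    exact absurd (hl b hab) (asymm (permOf_gt_of_notMem haS hab))
  · intro h
    rcases h with h | h
    · exact fun b hb => permOf_lt_of_mem h hb
    · intro b hb
      have : (a : ℕ) < (b : ℕ) := hb
      have := b.isLt
      omega

lemma Lset_permOf {S : Finset (Fin n)} (hlast : ∀ a : Fin n, (a : ℕ) = n - 1 → a ∈ S) :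
    Lset (permOf S) = S := by
  ext a
  rw [mem_Lset, lpos_permOf]
  constructor
  · rintro (h | h)
    · exact h
    · exact hlast a h
  · exact Or.inl


lemma card_filter_lt_val (x : Fin n) : #(Finset.univ.filter (fun v => v < x)) = (x : ℕ) := by
  have : Finset.univ.filter (fun v => v < x) = Finset.Iio x := by
    ext v; simp [Finset.mem_Iio]
  rw [this, Fin.card_Iio]

lemma card_filter_gt_val (x : Fin n) :
    #(Finset.univ.filter (fun v => x < v)) = n - 1 - (x : ℕ) := by
  have : Finset.univ.filter (fun v => x < v) = Finset.Ioi x := by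
    ext v; simp [Finset.mem_Ioi]
  rw [this, Fin.card_Ioi]

lemma card_filter_comp {π : Fin n → Fin n} (hbij : Function.Bijective π)
    (p : Fin n → Prop) [DecidablePred p] :
    #(Finset.univ.filter (fun b => p (π b))) = #(Finset.univ.filter p) := by
  apply Finset.card_bij (fun b _ => π b)
  · intro b hb
    simp only [mem_filter, Finset.mem_univ, true_and] at hb ⊢
    exact hb
  · intro b₁ _ b₂ _ h
    exact hbij.1 h
  · intro v hv
    obtain ⟨b, hb⟩ := hbij.2 v
    refine ⟨b, ?_, hb⟩
    simp only [mem_filter, Finset.mem_univ, true_and] at hv ⊢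
    rw [hb]; exact hv

lemma eq_permOf {π : Fin n → Fin n} (hbij : Function.Bijective π) (hext : Ext π) :
    π = permOf (Lset π) := by
  funext a
  by_cases ha : Lpos π a
  · have hmem : a ∈ Lset π := mem_Lset.mpr ha
    have hset : Finset.univ.filter (fun b => π b < π a) = (Lset π).filter (· < a) := by
      ext b
      simp only [mem_filter, Finset.mem_univ, true_and, mem_Lset]
      constructor
      · intro hlt
        have hba : b < a := by
          rcases lt_trichotomy b a with h | h | h
          · exact h
          · exact absurd (h ▸ hlt) (lt_irrefl _)
          · exact absurd (ha b h) (asymm hlt)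
        refine ⟨?_, hba⟩
        rcases hext b with hl | hh
        · exact hl
        · exact absurd (hh a hba) (asymm hlt)
      · rintro ⟨hl, hba⟩
        exact hl a hba
    have hval : (π a : ℕ) = cnt (Lset π) a := by
      have h1 := card_filter_comp hbij (fun v => v < π a)
      rw [card_filter_lt_val] at h1
      rw [← h1, hset]; rfl
    simp only [permOf, if_pos hmem]
    exact Fin.ext hval
  · have hmem : a ∉ Lset π := fun h => ha (mem_Lset.mp h)
    have hh : Hpos π a := (hext a).resolve_left ha
    have hset : Finset.univ.filter (fun b => π a < π b) = (Lset π)ᶜ.filter (· < a) := by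
      ext b
      simp only [mem_filter, Finset.mem_univ, true_and, Finset.mem_compl, mem_Lset]
      constructor
      · intro hlt
        have hba : b < a := by
          rcases lt_trichotomy b a with h | h | h
          · exact h
          · exact absurd (h ▸ hlt) (lt_irrefl _)
          · exact absurd (hh b h) (asymm hlt)
        refine ⟨fun hl => absurd (hl a hba) (asymm hlt), hba⟩
      · rintro ⟨hnl, hba⟩
        rcases hext b with hl | hhb
        · exact absurd hl hnl
        · exact hhb a hba
    have hval : n - 1 - (π a : ℕ) = cnt (Lset π)ᶜ a := by
      have h1 := card_filter_comp hbij (fun v => π a < v)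
      rw [card_filter_gt_val] at h1
      rw [← h1, hset]; rfl
    simp only [permOf, if_neg hmem]
    have := (π a).isLt
    refine Fin.ext ?_
    show (π a : ℕ) = n - 1 - cnt (Lset π)ᶜ a
    omega


/-- The canonical occurrence associated to a `(k-1)`-subset of low positions. -/
def occT (hn : 0 < n) (hk : 2 ≤ k) (T : Finset (Fin n)) (hT : T.card = k - 1) :
    Fin k → Fin n :=
  fun i => if h : (i : ℕ) < k - 1 then T.orderEmbOfFin hT ⟨i, h⟩ else ⟨n - 1, by omega⟩

lemma occT_isOcc (hn : 0 < n) (hk : 2 ≤ k) {π : Fin n → Fin n} (hext : Ext π)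
    {T : Finset (Fin n)} (hT : T.card = k - 1) (hTL : T ⊆ Lset π)
    (hTlast : ∀ x ∈ T, (x : ℕ) < n - 1) :
    IsOcc (fun i : Fin k => i) π (occT hn hk T hT) := by
  rw [isOcc_id_iff hext]
  constructor
  · intro i j hij
    by_cases hj : (j : ℕ) < k - 1
    · have hi : (i : ℕ) < k - 1 := lt_trans hij hj
      simp only [occT, dif_pos hi, dif_pos hj]
      exact (T.orderEmbOfFin hT).strictMono (show (⟨(i : ℕ), hi⟩ : Fin (k - 1)) < ⟨(j : ℕ), hj⟩ from hij)
    · by_cases hi : (i : ℕ) < k - 1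
      · simp only [occT, dif_pos hi, dif_neg hj]
        have hmem := T.orderEmbOfFin_mem hT ⟨(i : ℕ), hi⟩
        exact Fin.mk_lt_mk.mpr ((hTlast _ hmem))
      · exfalso
        have h1 : (i : ℕ) < (j : ℕ) := hij
        have := j.isLt
        omega
  · intro i hi
    have hi' : (i : ℕ) < k - 1 := by omega
    apply mem_Lset.mp
    apply hTL
    simp only [occT, dif_pos hi']
    exact T.orderEmbOfFin_mem hT _

lemma lastF_mem_Lset (hn : 0 < n) (π : Fin n → Fin n) :
    (⟨n - 1, by omega⟩ : Fin n) ∈ Lset π := by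
  rw [mem_Lset]
  intro b hb
  exfalso
  have h1 : n - 1 < (b : ℕ) := hb
  have := b.isLt
  omega

set_option maxHeartbeats 1000000 in
lemma co_fJ (hk : 2 ≤ k) {π : Fin n → Fin n} (hext : Ext π)
    (lastF : Fin n) (hlastF : (lastF : ℕ) = n - 1)
    {f : Fin k → Fin n} (hsm : StrictMono f)
    (hL : ∀ i : Fin k, (i : ℕ) + 1 < k → Lpos π (f i))
    (huniq : ∀ y, IsOcc (fun i : Fin k => i) π y → y = f)
    (J : Fin k) (hJ : (J : ℕ) = k - 1) :
    f J = lastF := by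
  have hgocc : IsOcc (fun i : Fin k => i) π
      (fun i : Fin k => if (i : ℕ) < k - 1 then f i else lastF) := by
    rw [isOcc_id_iff hext]
    constructor
    · intro i j hij
      by_cases hj : (j : ℕ) < k - 1
      · have hi : (i : ℕ) < k - 1 := lt_trans hij hj
        simpa only [if_pos hi, if_pos hj] using hsm hij
      · by_cases hi : (i : ℕ) < k - 1
        · simp only [if_pos hi, if_neg hj]
          have h1 : f i < f J := hsm (show i < J from by rw [Fin.lt_def]; omega)
          have h2 : (f i : ℕ) < (f J : ℕ) := h1
          have h3 := (f J).isLt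
          rw [Fin.lt_def]
          omega
        · exfalso
          have h1 : (i : ℕ) < (j : ℕ) := hij
          have := j.isLt
          omega
    · intro i hi
      have hi' : (i : ℕ) < k - 1 := by omega
      simpa only [if_pos hi'] using hL i hi
  have hge := huniq _ hgocc
  have h1 := congrFun hge J
  simp only [if_neg (show ¬ ((J : ℕ) < k - 1) from by omega)] at h1
  exact h1.symm

set_option maxHeartbeats 1000000 in
lemma co_fJ' (hk : 2 ≤ k) (hn : 2 ≤ n) {π : Fin n → Fin n} (hext : Ext π)
    (lastF : Fin n) (hlastF : (lastF : ℕ) = n - 1)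
    (sndF : Fin n) (hsndF : (sndF : ℕ) = n - 2)
    {f : Fin k → Fin n} (hsm : StrictMono f)
    (hL : ∀ i : Fin k, (i : ℕ) + 1 < k → Lpos π (f i))
    (huniq : ∀ y, IsOcc (fun i : Fin k => i) π y → y = f)
    (J : Fin k) (hJ : (J : ℕ) = k - 1)
    (J' : Fin k) (hJ' : (J' : ℕ) = k - 2)
    (hfJ : f J = lastF) :
    f J' = sndF := by
  have hJ'J : J' < J := by rw [Fin.lt_def]; omega
  have hfJ'lt : f J' < f J := hsm hJ'J
  have hfJ'le : (f J' : ℕ) ≤ n - 2 := by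
    have h1 : (f J' : ℕ) < (f J : ℕ) := hfJ'lt
    rw [hfJ] at h1
    omega
  by_contra hne
  have hlt : (f J' : ℕ) < n - 2 := by
    rcases lt_or_eq_of_le hfJ'le with h | h
    · exact h
    · exact absurd (Fin.ext (h.trans hsndF.symm) : f J' = sndF) hne
  obtain ⟨c, hc⟩ : ∃ x : Fin n, (x : ℕ) = (f J' : ℕ) + 1 :=
    ⟨⟨(f J' : ℕ) + 1, by omega⟩, rfl⟩
  have hgocc : IsOcc (fun i : Fin k => i) π
      (fun i : Fin k => if (i : ℕ) < k - 1 then f i else c) := by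
    rw [isOcc_id_iff hext]
    constructor
    · intro i j hij
      by_cases hj : (j : ℕ) < k - 1
      · have hi : (i : ℕ) < k - 1 := lt_trans hij hj
        simpa only [if_pos hi, if_pos hj] using hsm hij
      · by_cases hi : (i : ℕ) < k - 1
        · simp only [if_pos hi, if_neg hj]
          have h1 : f i ≤ f J' := hsm.monotone (show i ≤ J' from by
            rw [Fin.le_def]; omega)
          have h2 : (f i : ℕ) ≤ (f J' : ℕ) := h1
          rw [Fin.lt_def]
          omega
        · exfalso
          have h1 : (i : ℕ) < (j : ℕ) := hij
          have := j.isLt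
          omega
    · intro i hi
      have hi' : (i : ℕ) < k - 1 := by omega
      simpa only [if_pos hi'] using hL i hi
  have hge := huniq _ hgocc
  have h1 := congrFun hge J
  simp only [if_neg (show ¬ ((J : ℕ) < k - 1) from by omega)] at h1
  rw [hfJ] at h1
  have := congrArg Fin.val h1
  omega

set_option maxHeartbeats 1000000 in
lemma co_hge {π : Fin n → Fin n}
    (lastF : Fin n) (hlastmem : lastF ∈ Lset π)
    {f : Fin k → Fin n} (hsm : StrictMono f)
    (hL : ∀ i : Fin k, (i : ℕ) + 1 < k → Lpos π (f i))
    (J : Fin k) (hJ : (J : ℕ) = k - 1)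
    (hfJ : f J = lastF) :
    k ≤ (Lset π).card := by
  have himg : (Finset.univ : Finset (Fin k)).image f ⊆ Lset π := by
    intro x hx
    obtain ⟨i, _, hi⟩ := Finset.mem_image.mp hx
    by_cases hik : (i : ℕ) + 1 < k
    · exact hi ▸ mem_Lset.mpr (hL i hik)
    · have : i = J := by
        apply Fin.ext
        have := i.isLt
        omega
      rw [← hi, this, hfJ]
      exact hlastmem
  calc k = ((Finset.univ : Finset (Fin k)).image f).card := by
        rw [Finset.card_image_of_injective _ hsm.injective, Finset.card_univ,
          Fintype.card_fin]
    _ ≤ (Lset π).card := Finset.card_le_card himg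

set_option maxHeartbeats 1000000 in
lemma co_hle (hk : 2 ≤ k) {π : Fin n → Fin n} (hext : Ext π)
    (hn0 : 0 < n) (lastF : Fin n) (hlastF : (lastF : ℕ) = n - 1)
    (hlastmem : lastF ∈ Lset π)
    (f : Fin k → Fin n)
    (huniq : ∀ y, IsOcc (fun i : Fin k => i) π y → y = f) :
    (Lset π).card ≤ k := by
  by_contra hcon
  push_neg at hcon
  have hEcard : k ≤ ((Lset π).erase lastF).card := by
    rw [Finset.card_erase_of_mem hlastmem]
    omega
  obtain ⟨B, hBE, hBcard⟩ := Finset.exists_subset_card_eq hEcard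
  obtain ⟨x, hxB, y, hyB, hxy⟩ := Finset.one_lt_card.mp (by omega : 1 < B.card)
  have hElast : ∀ z ∈ (Lset π).erase lastF, (z : ℕ) < n - 1 := by
    intro z hz
    have h1 := (Finset.mem_erase.mp hz).1
    have h2 := z.isLt
    rcases lt_or_eq_of_le (Nat.le_pred_of_lt z.isLt) with h | h
    · exact h
    · exact absurd (Fin.ext (h.trans hlastF.symm)) h1
  have hEL : (Lset π).erase lastF ⊆ Lset π := Finset.erase_subset _ _
  have hT1card : (B.erase x).card = k - 1 := by
    rw [Finset.card_erase_of_mem hxB, hBcard]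
  have hT2card : (B.erase y).card = k - 1 := by
    rw [Finset.card_erase_of_mem hyB, hBcard]
  have hocc1 := occT_isOcc hn0 hk hext hT1card
    (fun z hz => hEL (hBE (Finset.mem_of_mem_erase hz)))
    (fun z hz => hElast z (hBE (Finset.mem_of_mem_erase hz)))
  have hocc2 := occT_isOcc hn0 hk hext hT2card
    (fun z hz => hEL (hBE (Finset.mem_of_mem_erase hz)))
    (fun z hz => hElast z (hBE (Finset.mem_of_mem_erase hz)))
  have heq : occT hn0 hk (B.erase x) hT1card = occT hn0 hk (B.erase y) hT2card := by
    rw [huniq _ hocc1, huniq _ hocc2]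
  have hyT1 : y ∈ B.erase x := Finset.mem_erase.mpr ⟨fun h => hxy h.symm, hyB⟩
  have hyrange : y ∈ Set.range ((B.erase x).orderEmbOfFin hT1card) := by
    rw [Finset.range_orderEmbOfFin]
    exact hyT1
  obtain ⟨j, hj⟩ := hyrange
  have hjk : (j : ℕ) < k - 1 := j.isLt
  have h1 : occT hn0 hk (B.erase x) hT1card ⟨(j : ℕ), by omega⟩ = y := by
    have hstep : occT hn0 hk (B.erase x) hT1card ⟨(j : ℕ), by omega⟩ =
        (B.erase x).orderEmbOfFin hT1card j := by
      simp only [occT, dif_pos hjk]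
    rw [hstep, hj]
  have h2 : occT hn0 hk (B.erase y) hT2card ⟨(j : ℕ), by omega⟩ ∈ B.erase y := by
    simp only [occT, dif_pos hjk]
    exact Finset.orderEmbOfFin_mem _ _ _
  rw [← heq, h1] at h2
  exact (Finset.mem_erase.mp h2).1 rfl

set_option maxHeartbeats 1000000 in
lemma co_mpr (hk : 2 ≤ k) (hn : 2 ≤ n) {π : Fin n → Fin n} (hext : Ext π)
    (hn0 : 0 < n) (lastF : Fin n) (hlastF : (lastF : ℕ) = n - 1)
    (hlastmem : lastF ∈ Lset π)
    (sndF : Fin n) (hsndF : (sndF : ℕ) = n - 2)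
    (hsndne : sndF ≠ lastF)
    (J : Fin k) (hJ : (J : ℕ) = k - 1)
    (J' : Fin k) (hJ' : (J' : ℕ) = k - 2)
    (hcard : (Lset π).card = k) (hsnd : sndF ∈ Lset π) :
    ContainsOnce (fun i : Fin k => i) π := by
  have hJ'J : J' < J := by rw [Fin.lt_def]; omega
  have hTcard : ((Lset π).erase lastF).card = k - 1 := by
    rw [Finset.card_erase_of_mem hlastmem, hcard]
  have hTL : (Lset π).erase lastF ⊆ Lset π := Finset.erase_subset _ _
  have hTlast : ∀ z ∈ (Lset π).erase lastF, (z : ℕ) < n - 1 := by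
    intro z hz
    have h1 := (Finset.mem_erase.mp hz).1
    rcases lt_or_eq_of_le (Nat.le_pred_of_lt z.isLt) with h | h
    · exact h
    · exact absurd (Fin.ext (h.trans hlastF.symm)) h1
  have hsndT : sndF ∈ (Lset π).erase lastF := Finset.mem_erase.mpr ⟨hsndne, hsnd⟩
  refine ⟨occT hn0 hk _ hTcard, occT_isOcc hn0 hk hext hTcard hTL hTlast, ?_⟩
  intro g hg
  obtain ⟨hsm, hL⟩ := (isOcc_id_iff hext g).mp hg
  have hgT : ∀ i : Fin k, (i : ℕ) < k - 1 → g i ∈ (Lset π).erase lastF := by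
    intro i hi
    refine Finset.mem_erase.mpr ⟨?_, mem_Lset.mpr (hL i (by omega))⟩
    have hlt : g i < g J := hsm (show i < J from by rw [Fin.lt_def]; omega)
    have h1 : (g i : ℕ) < (g J : ℕ) := hlt
    have h2 := (g J).isLt
    intro hEq
    have := congrArg Fin.val hEq
    omega
  have hg'mem : ∀ i : Fin (k - 1),
      g ⟨(i : ℕ), by have := i.isLt; omega⟩ ∈ (Lset π).erase lastF :=
    fun i => hgT _ i.isLt
  have hg'mono : StrictMono
      (fun i : Fin (k - 1) => g ⟨(i : ℕ), by have := i.isLt; omega⟩) := by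
    intro i j hij
    exact hsm (show (⟨(i : ℕ), _⟩ : Fin k) < ⟨(j : ℕ), _⟩ from hij)
  have hgeq : (fun i : Fin (k - 1) => g ⟨(i : ℕ), by have := i.isLt; omega⟩) =
      ⇑(((Lset π).erase lastF).orderEmbOfFin hTcard) :=
    Finset.orderEmbOfFin_unique hTcard hg'mem hg'mono
  obtain ⟨topI, htopIval⟩ : ∃ x : Fin (k - 1), (x : ℕ) = k - 2 :=
    ⟨⟨k - 2, by omega⟩, rfl⟩
  have htop : ((Lset π).erase lastF).orderEmbOfFin hTcard topI = sndF := by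
    have hrange : sndF ∈ Set.range (((Lset π).erase lastF).orderEmbOfFin hTcard) := by
      rw [Finset.range_orderEmbOfFin]
      exact hsndT
    obtain ⟨j, hj⟩ := hrange
    have h1 : sndF ≤ ((Lset π).erase lastF).orderEmbOfFin hTcard topI := by
      rw [← hj]
      exact (((Lset π).erase lastF).orderEmbOfFin hTcard).monotone
        (show j ≤ topI from by rw [Fin.le_def]; have := j.isLt; omega)
    have h2 : ((Lset π).erase lastF).orderEmbOfFin hTcard topI ≤ sndF := by
      have hmem : ((Lset π).erase lastF).orderEmbOfFin hTcard topI ∈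
          (Lset π).erase lastF := Finset.orderEmbOfFin_mem _ _ _
      have := hTlast _ hmem
      rw [Fin.le_def]
      omega
    exact le_antisymm h2 h1
  have hgJ : g J = lastF := by
    have hJ'k : (J' : ℕ) < k - 1 := by omega
    have h2 : g J' = sndF := by
      have h3 := congrFun hgeq ⟨(J' : ℕ), hJ'k⟩
      simp only at h3
      have h4 : (⟨((⟨(J' : ℕ), hJ'k⟩ : Fin (k - 1)) : ℕ), by omega⟩ : Fin k) = J' :=
        Fin.ext rfl
      rw [h4] at h3
      have h5 : (⟨(J' : ℕ), hJ'k⟩ : Fin (k - 1)) = topI := Fin.ext (show (J' : ℕ) = (topI : ℕ) from by omega)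
      rw [h5, htop] at h3
      exact h3
    have h1 : g J' < g J := hsm hJ'J
    rw [h2] at h1
    have h4 : (sndF : ℕ) < (g J : ℕ) := h1
    have := (g J).isLt
    apply Fin.ext
    omega
  funext i
  by_cases hi : (i : ℕ) < k - 1
  · have h1 : g i = g ⟨((⟨(i : ℕ), hi⟩ : Fin (k - 1)) : ℕ), by omega⟩ := by
      congr 1
    rw [h1]
    have h3 := congrFun hgeq ⟨(i : ℕ), hi⟩
    simp only at h3
    rw [h3]
    simp only [occT, dif_pos hi]
  · have hiJ : i = J := by
      apply Fin.ext
      have := i.isLt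
      omega
    rw [hiJ, hgJ]
    simp only [occT, dif_neg (show ¬ ((J : ℕ) < k - 1) from by omega)]
    exact Fin.ext (show (lastF : ℕ) = n - 1 from by omega)

set_option maxHeartbeats 1000000 in
lemma containsOnce_iff (hk : 2 ≤ k) (hn : 2 ≤ n) {π : Fin n → Fin n}
    (hbij : Function.Bijective π) (hext : Ext π) :
    ContainsOnce (fun i : Fin k => i) π ↔
      ((Lset π).card = k ∧ (⟨n - 2, by omega⟩ : Fin n) ∈ Lset π) := by
  have hn0 : 0 < n := by omega
  obtain ⟨lastF, hlastF⟩ : ∃ x : Fin n, (x : ℕ) = n - 1 := ⟨⟨n - 1, by omega⟩, rfl⟩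
  obtain ⟨sndF, hsndF⟩ : ∃ x : Fin n, (x : ℕ) = n - 2 := ⟨⟨n - 2, by omega⟩, rfl⟩
  have hsndeq : (⟨n - 2, by omega⟩ : Fin n) = sndF := Fin.ext (by show n - 2 = (sndF : ℕ); omega)
  rw [hsndeq]
  have hlastmem : lastF ∈ Lset π := by
    have : lastF = (⟨n - 1, by omega⟩ : Fin n) := Fin.ext (by show (lastF : ℕ) = n - 1; omega)
    rw [this]; exact lastF_mem_Lset hn0 π
  have hsndne : sndF ≠ lastF := fun h => by
    have := congrArg Fin.val h; omega
  obtain ⟨J, hJ⟩ : ∃ x : Fin k, (x : ℕ) = k - 1 := ⟨⟨k - 1, by omega⟩, rfl⟩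
  obtain ⟨J', hJ'⟩ : ∃ x : Fin k, (x : ℕ) = k - 2 := ⟨⟨k - 2, by omega⟩, rfl⟩
  constructor
  · rintro ⟨f, hf, huniq⟩
    obtain ⟨hsm, hL⟩ := (isOcc_id_iff hext f).mp hf
    have hfJ := co_fJ hk hext lastF hlastF hsm hL huniq J hJ
    have hfJ' := co_fJ' hk hn hext lastF hlastF sndF hsndF hsm hL huniq J hJ J' hJ' hfJ
    refine ⟨le_antisymm (co_hle hk hext hn0 lastF hlastF hlastmem f huniq)
      (co_hge lastF hlastmem hsm hL J hJ hfJ), ?_⟩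
    rw [← hfJ']
    exact mem_Lset.mpr (hL J' (by omega))
  · rintro ⟨hcard, hsnd⟩
    exact co_mpr hk hn hext hn0 lastF hlastF hlastmem sndF hsndF hsndne J hJ J' hJ' hcard hsnd


lemma card_lt (hk : 2 ≤ k) (hnk : n < k) :
    Nat.card {π : Fin n → Fin n // Function.Bijective π ∧
      Avoids p213 π ∧ Avoids p231 π ∧ ContainsOnce (fun i : Fin k => i) π} = 0 := by
  have : IsEmpty {π : Fin n → Fin n // Function.Bijective π ∧
      Avoids p213 π ∧ Avoids p231 π ∧ ContainsOnce (fun i : Fin k => i) π} := by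
    refine ⟨fun ⟨π, _, _, _, hco⟩ => ?_⟩
    obtain ⟨f, hf, _⟩ := hco
    have hinj : Function.Injective f := hf.1.injective
    have := Fintype.card_le_of_injective f hinj
    simp only [Fintype.card_fin] at this
    omega
  exact Nat.card_of_isEmpty

set_option maxHeartbeats 1000000 in
lemma stepA (hk : 2 ≤ k) (hnk : k ≤ n) :
    Nat.card {π : Fin n → Fin n // Function.Bijective π ∧
      Avoids p213 π ∧ Avoids p231 π ∧ ContainsOnce (fun i : Fin k => i) π} =
      Nat.card {π : Fin n → Fin n // Function.Bijective π ∧ Ext π ∧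
        (Lset π).card = k ∧ (⟨n - 2, by omega⟩ : Fin n) ∈ Lset π} := by
  have hn : 2 ≤ n := le_trans hk hnk
  apply Nat.card_congr
  apply Equiv.subtypeEquivRight
  intro π
  constructor
  · rintro ⟨hb, h213, h231, hco⟩
    have hext : Ext π := (avoids_iff hb.1).mp ⟨h213, h231⟩
    obtain ⟨hc, hm⟩ := (containsOnce_iff hk hn hb hext).mp hco
    exact ⟨hb, hext, hc, hm⟩
  · rintro ⟨hb, hext, hc, hm⟩
    obtain ⟨h213, h231⟩ := (avoids_iff hb.1).mpr hext
    exact ⟨hb, h213, h231, (containsOnce_iff hk hn hb hext).mpr ⟨hc, hm⟩⟩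

set_option maxHeartbeats 1000000 in
lemma stepB (hk : 2 ≤ k) (hnk : k ≤ n) :
    Nat.card {π : Fin n → Fin n // Function.Bijective π ∧ Ext π ∧
        (Lset π).card = k ∧ (⟨n - 2, by have := le_trans hk hnk; omega⟩ : Fin n) ∈ Lset π} =
      Nat.card {S : Finset (Fin n) // (⟨n - 1, by have := le_trans hk hnk; omega⟩ : Fin n) ∈ S ∧
        (⟨n - 2, by have := le_trans hk hnk; omega⟩ : Fin n) ∈ S ∧ S.card = k} := by
  have hn : 2 ≤ n := le_trans hk hnk
  have hn0 : 0 < n := by omega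
  apply Nat.card_eq_of_bijective
    (f := fun x => ⟨Lset x.1, lastF_mem_Lset hn0 x.1, x.2.2.2.2, x.2.2.2.1⟩)
  constructor
  · rintro ⟨π₁, hb₁, he₁, _, _⟩ ⟨π₂, hb₂, he₂, _, _⟩ h
    have hLeq : Lset π₁ = Lset π₂ := congrArg Subtype.val h
    apply Subtype.ext
    show π₁ = π₂
    rw [eq_permOf hb₁ he₁, eq_permOf hb₂ he₂, hLeq]
  · rintro ⟨S, h1, h2, h3⟩
    have hlast : ∀ a : Fin n, (a : ℕ) = n - 1 → a ∈ S := by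
      intro a ha
      have : a = (⟨n - 1, by omega⟩ : Fin n) := Fin.ext ha
      rw [this]; exact h1
    have hLS : Lset (permOf S) = S := Lset_permOf hlast
    refine ⟨⟨permOf S, permOf_bijective S, permOf_ext S, ?_, ?_⟩, ?_⟩
    · rw [hLS, h3]
    · rw [hLS]; exact h2
    · apply Subtype.ext
      exact hLS

set_option maxHeartbeats 1000000 in
lemma stepC (hk : 2 ≤ k) (hn : 2 ≤ n) {a b : Fin n}
    (haval : (a : ℕ) = n - 1) (hbval : (b : ℕ) = n - 2) :
    Nat.card {S : Finset (Fin n) // a ∈ S ∧ b ∈ S ∧ S.card = k} =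
      (n - 2).choose (k - 2) := by
  have hne : b ≠ a := fun h => by
    have := congrArg Fin.val h
    omega
  have key : Nat.card {S : Finset (Fin n) // a ∈ S ∧ b ∈ S ∧ S.card = k} =
      Nat.card ↥(((Finset.univ.erase a).erase b).powersetCard (k - 2)) := by
    apply Nat.card_eq_of_bijective (f := fun x =>
      ⟨(x.1.erase a).erase b, by
        rw [Finset.mem_powersetCard]
        constructor
        · exact Finset.erase_subset_erase _ (Finset.erase_subset_erase _
            (Finset.subset_univ _))
        · have hbmem : b ∈ x.1.erase a := Finset.mem_erase.mpr ⟨hne, x.2.2.1⟩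
          rw [Finset.card_erase_of_mem hbmem, Finset.card_erase_of_mem x.2.1, x.2.2.2]
          omega⟩)
    constructor
    · rintro ⟨S₁, ha₁, hb₁, _⟩ ⟨S₂, ha₂, hb₂, _⟩ h
      have heq : (S₁.erase a).erase b = (S₂.erase a).erase b := congrArg Subtype.val h
      apply Subtype.ext
      show S₁ = S₂
      ext x
      by_cases hxa : x = a
      · subst hxa; simp [ha₁, ha₂]
      · by_cases hxb : x = b
        · subst hxb; simp [hb₁, hb₂]
        · have m1 : x ∈ S₁ ↔ x ∈ (S₁.erase a).erase b := by
            simp [Finset.mem_erase, hxa, hxb]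
          have m2 : x ∈ S₂ ↔ x ∈ (S₂.erase a).erase b := by
            simp [Finset.mem_erase, hxa, hxb]
          rw [m1, heq, ← m2]
    · rintro ⟨T, hT⟩
      rw [Finset.mem_powersetCard] at hT
      obtain ⟨hTsub, hTcard⟩ := hT
      have haT : a ∉ T := fun h => by
        have := hTsub h
        exact absurd (Finset.mem_of_mem_erase this) (Finset.notMem_erase a _)
      have hbT : b ∉ T := fun h => absurd (hTsub h) (Finset.notMem_erase b _)
      refine ⟨⟨insert a (insert b T), Finset.mem_insert_self _ _,
        Finset.mem_insert_of_mem (Finset.mem_insert_self _ _), ?_⟩, ?_⟩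
      · rw [Finset.card_insert_of_notMem, Finset.card_insert_of_notMem hbT, hTcard]
        · omega
        · simp only [Finset.mem_insert]
          push_neg
          exact ⟨fun h => hne h.symm, haT⟩
      · apply Subtype.ext
        show ((insert a (insert b T)).erase a).erase b = T
        ext x
        simp only [Finset.mem_erase, Finset.mem_insert]
        constructor
        · rintro ⟨hxb, hxa, h | h | h⟩
          · exact absurd h hxa
          · exact absurd h hxb
          · exact h
        · intro hx
          refine ⟨fun h => hbT (h ▸ hx), fun h => haT (h ▸ hx), Or.inr (Or.inr hx)⟩
  rw [key, Nat.card_eq_fintype_card, Fintype.card_coe, Finset.card_powersetCard]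
  congr 1
  rw [Finset.card_erase_of_mem, Finset.card_erase_of_mem (Finset.mem_univ a)]
  · simp only [Finset.card_univ, Fintype.card_fin]
    omega
  · exact Finset.mem_erase.mpr ⟨hne, Finset.mem_univ b⟩

lemma card_main (hk : 2 ≤ k) (hnk : k ≤ n) :
    Nat.card {π : Fin n → Fin n // Function.Bijective π ∧
      Avoids p213 π ∧ Avoids p231 π ∧ ContainsOnce (fun i : Fin k => i) π} =
      (n - 2).choose (k - 2) := by
  rw [stepA hk hnk, stepB hk hnk, stepC hk (le_trans hk hnk) rfl rfl]


lemma isOcc_one (τ : Fin 1 → Fin 1) (π : Fin n → Fin n) (f : Fin 1 → Fin n) :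
    IsOcc τ π f := by
  constructor
  · intro a b h
    have : a = b := Subsingleton.elim a b
    subst this
    exact absurd h (lt_irrefl _)
  · intro i j
    have : i = j := Subsingleton.elim i j
    subst this
    constructor <;> intro h <;> exact absurd h (lt_irrefl _)

lemma card_one (hn1 : n = 1) :
    Nat.card {π : Fin n → Fin n // Function.Bijective π ∧
      Avoids p213 π ∧ Avoids p231 π ∧ ContainsOnce (fun i : Fin 1 => i) π} = 1 := by
  subst hn1
  have : Unique {π : Fin 1 → Fin 1 // Function.Bijective π ∧
      Avoids p213 π ∧ Avoids p231 π ∧ ContainsOnce (fun i : Fin 1 => i) π} := by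
    refine ⟨⟨⟨id, Function.bijective_id, ?_, ?_, ?_⟩⟩, ?_⟩
    · rintro ⟨f, hsm, -⟩
      exact absurd (Subsingleton.elim (f 0) (f 1)) (ne_of_lt (hsm (by decide)))
    · rintro ⟨f, hsm, -⟩
      exact absurd (Subsingleton.elim (f 0) (f 1)) (ne_of_lt (hsm (by decide)))
    · exact ⟨id, isOcc_one _ _ _, fun y _ => Subsingleton.elim y id⟩
    · rintro ⟨π, _⟩
      apply Subtype.ext
      funext x
      exact Subsingleton.elim _ _
  exact Nat.card_unique

lemma card_one' (hn1 : n ≠ 1) :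
    Nat.card {π : Fin n → Fin n // Function.Bijective π ∧
      Avoids p213 π ∧ Avoids p231 π ∧ ContainsOnce (fun i : Fin 1 => i) π} = 0 := by
  have : IsEmpty {π : Fin n → Fin n // Function.Bijective π ∧
      Avoids p213 π ∧ Avoids p231 π ∧ ContainsOnce (fun i : Fin 1 => i) π} := by
    refine ⟨fun ⟨π, _, _, _, hco⟩ => ?_⟩
    obtain ⟨f, _, huniq⟩ := hco
    rcases Nat.lt_or_ge n 1 with h | h
    · have hn0 : n = 0 := by omega
      subst hn0
      exact (f 0).elim0
    · have hn2 : 2 ≤ n := by omega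
      have h1 := huniq (fun _ => ⟨0, by omega⟩) (isOcc_one _ _ _)
      have h2 := huniq (fun _ => ⟨1, by omega⟩) (isOcc_one _ _ _)
      have := congrFun (h1.trans h2.symm) 0
      have := congrArg Fin.val this
      simp only at this
      exact absurd this (by omega)
  exact Nat.card_of_isEmpty

lemma isOcc_rev_comp {τ : Fin k → Fin k} {π : Fin n → Fin n} {f : Fin k → Fin n} :
    IsOcc τ (Fin.rev ∘ π) f ↔ IsOcc (Fin.rev ∘ τ) π f := by
  unfold IsOcc
  apply and_congr_right
  intro _
  constructor
  · intro h i j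
    simpa only [Function.comp_apply, Fin.rev_lt_rev] using h j i
  · intro h i j
    simpa only [Function.comp_apply, Fin.rev_lt_rev] using h j i

lemma avoids_rev_comp {τ : Fin k → Fin k} {π : Fin n → Fin n} :
    Avoids τ (Fin.rev ∘ π) ↔ Avoids (Fin.rev ∘ τ) π :=
  not_congr (exists_congr fun _ => isOcc_rev_comp)

lemma containsOnce_rev_comp {τ : Fin k → Fin k} {π : Fin n → Fin n} :
    ContainsOnce τ (Fin.rev ∘ π) ↔ ContainsOnce (Fin.rev ∘ τ) π := by
  unfold ContainsOnce
  apply existsUnique_congr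
  intro f
  exact isOcc_rev_comp

lemma rev_comp_p213 : Fin.rev ∘ p213 = p231 := by
  funext i
  fin_cases i <;> rfl

lemma rev_comp_p231 : Fin.rev ∘ p231 = p213 := by
  funext i
  fin_cases i <;> rfl

lemma rev_comp_rev (π : Fin n → Fin n) : Fin.rev ∘ (Fin.rev ∘ π) = π :=
  funext fun i => Fin.rev_rev _

lemma rev_comp_rev_fun : (Fin.rev ∘ (Fin.rev : Fin k → Fin k)) = (fun i : Fin k => i) :=
  funext fun i => Fin.rev_rev i

lemma revMemIff (π : Fin n → Fin n) :
    (Function.Bijective π ∧ Avoids p213 π ∧ Avoids p231 π ∧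
        ContainsOnce (fun i : Fin k => i) π) ↔
      (Function.Bijective (Fin.rev ∘ π) ∧ Avoids p213 (Fin.rev ∘ π) ∧
        Avoids p231 (Fin.rev ∘ π) ∧ ContainsOnce (Fin.rev : Fin k → Fin k) (Fin.rev ∘ π)) := by
  have hb : Function.Bijective (Fin.rev ∘ π) ↔ Function.Bijective π :=
    (Function.Bijective.of_comp_iff' Fin.rev_bijective π)
  have h1 : Avoids p213 (Fin.rev ∘ π) ↔ Avoids p231 π := by
    rw [avoids_rev_comp, rev_comp_p213]
  have h2 : Avoids p231 (Fin.rev ∘ π) ↔ Avoids p213 π := by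
    rw [avoids_rev_comp, rev_comp_p231]
  have h3 : ContainsOnce (Fin.rev : Fin k → Fin k) (Fin.rev ∘ π) ↔
      ContainsOnce (fun i : Fin k => i) π := by
    rw [containsOnce_rev_comp, rev_comp_rev_fun]
  rw [hb, h1, h2, h3]
  tauto

lemma card_rev (n k : ℕ) :
    Nat.card {π : Fin n → Fin n // Function.Bijective π ∧
      Avoids p213 π ∧ Avoids p231 π ∧ ContainsOnce (Fin.rev : Fin k → Fin k) π} =
    Nat.card {π : Fin n → Fin n // Function.Bijective π ∧
      Avoids p213 π ∧ Avoids p231 π ∧ ContainsOnce (fun i : Fin k => i) π} := by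
  apply Nat.card_congr
  refine ⟨fun x => ⟨Fin.rev ∘ x.1, ?_⟩, fun y => ⟨Fin.rev ∘ y.1, (revMemIff y.1).mp y.2⟩,
    ?_, ?_⟩
  · have h := revMemIff (n := n) (k := k) (Fin.rev ∘ x.1)
    rw [rev_comp_rev] at h
    exact h.mpr x.2
  · intro y
    apply Subtype.ext
    exact rev_comp_rev _
  · intro x
    apply Subtype.ext
    exact rev_comp_rev _

end Stmt14

open PowerSeries in
/-- for `k ≥ 1`, the generating function of `|Sₙ(213,231; (1,2,…,k))|` is
`x^k/(1−x)^{k−1}`, and the same holds for the decreasing pattern `(k, k−1, …, 1)`. -/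
theorem stmt14 (k : ℕ) (hk : 1 ≤ k) :
    ((1 - X) ^ (k - 1) : PowerSeries ℚ) *
        PowerSeries.mk (fun n =>
          (Nat.card {π : Fin n → Fin n // Function.Bijective π ∧
            Avoids p213 π ∧ Avoids p231 π ∧ ContainsOnce (fun i : Fin k => i) π} : ℚ)) =
        X ^ k ∧
    ((1 - X) ^ (k - 1) : PowerSeries ℚ) *
        PowerSeries.mk (fun n =>
          (Nat.card {π : Fin n → Fin n // Function.Bijective π ∧
            Avoids p213 π ∧ Avoids p231 π ∧ ContainsOnce (Fin.rev : Fin k → Fin k) π} : ℚ)) =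
        X ^ k := by
  have main : ((1 - X) ^ (k - 1) : PowerSeries ℚ) *
      PowerSeries.mk (fun n =>
        (Nat.card {π : Fin n → Fin n // Function.Bijective π ∧
          Avoids p213 π ∧ Avoids p231 π ∧ ContainsOnce (fun i : Fin k => i) π} : ℚ)) =
      X ^ k := by
    rcases eq_or_lt_of_le hk with hk1 | hk2
    · -- k = 1
      subst hk1
      rw [show (1 : ℕ) - 1 = 0 from rfl, pow_zero, one_mul, pow_one]
      ext m
      rw [PowerSeries.coeff_mk, PowerSeries.coeff_X]
      by_cases hm : m = 1
      · subst hm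
        rw [if_pos rfl, Stmt14.card_one rfl]
        norm_num
      · rw [if_neg hm, Stmt14.card_one' hm]
        norm_num
    · have hk2' : 2 ≤ k := hk2
      have hmk : PowerSeries.mk (fun n =>
          (Nat.card {π : Fin n → Fin n // Function.Bijective π ∧
            Avoids p213 π ∧ Avoids p231 π ∧ ContainsOnce (fun i : Fin k => i) π} : ℚ)) =
          X ^ k * (PowerSeries.invOneSubPow ℚ (k - 1)).val := by
        rw [PowerSeries.invOneSubPow_val_eq_mk_sub_one_add_choose_of_pos ℚ (k - 1) (by omega)]
        ext m
        rw [PowerSeries.coeff_mk, PowerSeries.coeff_X_pow_mul']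
        split_ifs with h
        · rw [PowerSeries.coeff_mk, Stmt14.card_main hk2' h]
          norm_cast
          congr 1 <;> omega
        · push_neg at h
          rw [Stmt14.card_lt hk2' h]
          norm_num
      rw [hmk]
      have hunit : ((1 - X) ^ (k - 1) : PowerSeries ℚ) *
          (PowerSeries.invOneSubPow ℚ (k - 1)).val = 1 := by
        rw [← PowerSeries.invOneSubPow_inv_eq_one_sub_pow]
        exact (PowerSeries.invOneSubPow ℚ (k - 1)).inv_val
      calc ((1 - X) ^ (k - 1) : PowerSeries ℚ) *
            (X ^ k * (PowerSeries.invOneSubPow ℚ (k - 1)).val)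
          = X ^ k * ((1 - X) ^ (k - 1) * (PowerSeries.invOneSubPow ℚ (k - 1)).val) := by
            ring
        _ = X ^ k := by rw [hunit, mul_one]
  refine ⟨main, ?_⟩
  have hrev : PowerSeries.mk (fun n =>
      (Nat.card {π : Fin n → Fin n // Function.Bijective π ∧
        Avoids p213 π ∧ Avoids p231 π ∧ ContainsOnce (Fin.rev : Fin k → Fin k) π} : ℚ)) =
      PowerSeries.mk (fun n =>
      (Nat.card {π : Fin n → Fin n // Function.Bijective π ∧
        Avoids p213 π ∧ Avoids p231 π ∧ ContainsOnce (fun i : Fin k => i) π} : ℚ)) := by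
    have hfun : (fun n => (Nat.card {π : Fin n → Fin n // Function.Bijective π ∧
        Avoids p213 π ∧ Avoids p231 π ∧ ContainsOnce (Fin.rev : Fin k → Fin k) π} : ℚ)) =
        (fun n => (Nat.card {π : Fin n → Fin n // Function.Bijective π ∧
        Avoids p213 π ∧ Avoids p231 π ∧ ContainsOnce (fun i : Fin k => i) π} : ℚ)) :=
      funext fun n => by rw [Stmt14.card_rev]
    exact congrArg PowerSeries.mk hfun
  rw [hrev]
  exact main
end

section
/- The number of permutations of length n avoiding 213 and 231 and containing the pattern 123 exactly once equals n − 2 for n ≥ 3 (generating function x³/(1−x)²), and the same count holds for the pattern 321. -/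
open Function

section Patterns

variable {k n : ℕ} {τ : Fin k → Fin k} {π : Fin n → Fin n} {f : Fin k → Fin n}

lemma isOcc_iff_of_injective (hτ : Injective τ) :
    IsOcc τ π f ↔ StrictMono f ∧ ∀ i j, τ i < τ j → π (f i) < π (f j) := by
  refine and_congr_right fun _ => ⟨fun h i j => (h i j).1, fun h i j => ⟨h i j, fun hlt => ?_⟩⟩
  rcases lt_trichotomy (τ i) (τ j) with hij | hij | hji
  · exact hij
  · exact absurd hlt (by rw [hτ hij]; exact lt_irrefl _)
  · exact absurd (h j i hji) (asymm hlt)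

lemma isOcc_rev_comp_iff : IsOcc τ (Fin.rev ∘ π) f ↔ IsOcc (Fin.rev ∘ τ) π f := by
  simp only [IsOcc, comp_apply, Fin.rev_lt_rev]
  exact and_congr_right fun _ => ⟨fun h i j => h j i, fun h i j => h j i⟩

lemma avoids_rev_comp_iff : Avoids τ (Fin.rev ∘ π) ↔ Avoids (Fin.rev ∘ τ) π := by
  simp only [Avoids, isOcc_rev_comp_iff]

lemma containsOnce_rev_comp_iff :
    ContainsOnce τ (Fin.rev ∘ π) ↔ ContainsOnce (Fin.rev ∘ τ) π := by
  simp only [ContainsOnce, isOcc_rev_comp_iff]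

end Patterns

section ThreePatterns

variable {n : ℕ} {π : Fin n → Fin n} {f : Fin 3 → Fin n}

lemma strictMono_vec3_iff {a b c : Fin n} : StrictMono ![a, b, c] ↔ a < b ∧ b < c := by
  simp [Fin.strictMono_iff_lt_succ, Fin.forall_fin_succ]

lemma isOcc_p123_iff :
    IsOcc p123 π f ↔ StrictMono f ∧ π (f 0) < π (f 1) ∧ π (f 1) < π (f 2) := by
  rw [isOcc_iff_of_injective (by decide)]
  refine and_congr_right fun _ => ⟨fun h => ⟨h 0 1 (by decide), h 1 2 (by decide)⟩, ?_⟩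
  rintro ⟨h01, h12⟩ i j hij
  fin_cases i <;> fin_cases j <;>
    first | exact absurd hij (by decide) | assumption | exact h01.trans h12

lemma isOcc_p213_iff :
    IsOcc p213 π f ↔ StrictMono f ∧ π (f 1) < π (f 0) ∧ π (f 0) < π (f 2) := by
  rw [isOcc_iff_of_injective (by decide)]
  refine and_congr_right fun _ => ⟨fun h => ⟨h 1 0 (by decide), h 0 2 (by decide)⟩, ?_⟩
  rintro ⟨h10, h02⟩ i j hij
  fin_cases i <;> fin_cases j <;>
    first | exact absurd hij (by decide) | assumption | exact h10.trans h02

lemma isOcc_p231_iff :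
    IsOcc p231 π f ↔ StrictMono f ∧ π (f 0) < π (f 1) ∧ π (f 2) < π (f 0) := by
  rw [isOcc_iff_of_injective (by decide)]
  refine and_congr_right fun _ => ⟨fun h => ⟨h 0 1 (by decide), h 2 0 (by decide)⟩, ?_⟩
  rintro ⟨h01, h20⟩ i j hij
  fin_cases i <;> fin_cases j <;>
    first | exact absurd hij (by decide) | assumption | exact h20.trans h01

lemma rev_comp_p123 : Fin.rev ∘ p123 = p321 := by decide
lemma rev_comp_p213 : Fin.rev ∘ p213 = p231 := by decide
lemma rev_comp_p231 : Fin.rev ∘ p231 = p213 := by decide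

end ThreePatterns

section SuffixExtrema

variable {n : ℕ}

def IsSuffixMin (π : Fin n → Fin n) (i : Fin n) : Prop := ∀ j, i < j → π i < π j

def IsSuffixMax (π : Fin n → Fin n) (i : Fin n) : Prop := ∀ j, i < j → π j < π i

variable {π σ : Fin n → Fin n}

lemma isSuffixMin_of_lt {i j : Fin n} (hS : IsSuffixMin π i ∨ IsSuffixMax π i) (hij : i < j)
    (h : π i < π j) : IsSuffixMin π i :=
  hS.resolve_right fun hmax => lt_asymm h (hmax j hij)

lemma avoids_p213_and_avoids_p231_iff (hπ : Injective π) :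
    Avoids p213 π ∧ Avoids p231 π ↔ ∀ i, IsSuffixMin π i ∨ IsSuffixMax π i := by
  constructor
  · rintro ⟨h213, h231⟩ i
    by_contra! h
    simp only [IsSuffixMin, IsSuffixMax, not_forall, not_lt, exists_prop] at h
    obtain ⟨⟨j, hij, hj⟩, k, hik, hk⟩ := h
    replace hj := hj.lt_of_ne (hπ.ne hij.ne')
    replace hk := hk.lt_of_ne (hπ.ne hik.ne)
    rcases lt_trichotomy j k with hjk | rfl | hkj
    · exact h213 ⟨![i, j, k], isOcc_p213_iff.2 ⟨strictMono_vec3_iff.2 ⟨hij, hjk⟩, hj, hk⟩⟩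
    · exact lt_asymm hj hk
    · exact h231 ⟨![i, k, j], isOcc_p231_iff.2 ⟨strictMono_vec3_iff.2 ⟨hik, hkj⟩, hk, hj⟩⟩
  · intro hS
    refine ⟨fun ⟨f, hf⟩ => ?_, fun ⟨f, hf⟩ => ?_⟩
    · obtain ⟨hf, h10, h02⟩ := isOcc_p213_iff.1 hf
      rcases hS (f 0) with hmin | hmax
      · exact lt_asymm h10 (hmin _ (hf (by decide)))
      · exact lt_asymm h02 (hmax _ (hf (by decide)))
    · obtain ⟨hf, h01, h20⟩ := isOcc_p231_iff.1 hf
      rcases hS (f 0) with hmin | hmax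
      · exact lt_asymm h20 (hmin _ (hf (by decide)))
      · exact lt_asymm h01 (hmax _ (hf (by decide)))

lemma isOcc_p123_iff_isSuffixMin (hS : ∀ i, IsSuffixMin π i ∨ IsSuffixMax π i)
    {f : Fin 3 → Fin n} :
    IsOcc p123 π f ↔ StrictMono f ∧ IsSuffixMin π (f 0) ∧ IsSuffixMin π (f 1) := by
  rw [isOcc_p123_iff]
  refine and_congr_right fun hf => ⟨fun ⟨h01, h12⟩ => ?_, fun ⟨h0, h1⟩ => ?_⟩
  · exact ⟨isSuffixMin_of_lt (hS _) (hf (by decide)) h01,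
      isSuffixMin_of_lt (hS _) (hf (by decide)) h12⟩
  · exact ⟨h0 _ (hf (by decide)), h1 _ (hf (by decide))⟩

/-- The relative order of two entries is decided by the label (suffix minimum or maximum) of the
earlier one, so the labels determine the permutation. -/
lemma eq_of_isSuffixMin_iff (hπ : Bijective π) (hSπ : ∀ i, IsSuffixMin π i ∨ IsSuffixMax π i)
    (hSσ : ∀ i, IsSuffixMin σ i ∨ IsSuffixMax σ i) (h : ∀ i, IsSuffixMin π i ↔ IsSuffixMin σ i) :
    π = σ := by
  have hlt : ∀ i j, π i < π j → σ i < σ j := by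
    intro i j hπij
    rcases lt_trichotomy i j with hij | rfl | hji
    · exact (h i).1 (isSuffixMin_of_lt (hSπ i) hij hπij) j hij
    · exact absurd hπij (lt_irrefl _)
    · have hmin : ¬ IsSuffixMin σ j := fun hmin => lt_asymm hπij ((h j).2 hmin i hji)
      exact (hSσ j).resolve_left hmin i hji
  let e := Equiv.ofBijective π hπ
  have hmono : StrictMono (σ ∘ e.symm) := fun u v huv =>
    hlt _ _ (by simpa only [e, Equiv.ofBijective_apply_symm_apply] using huv)
  funext i
  simpa [e] using (congrFun hmono.eq_id (π i)).symm

lemma exists_isSuffixMin_iff_of_containsOnce_p123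
    (hS : ∀ i, IsSuffixMin π i ∨ IsSuffixMax π i) (h : ContainsOnce p123 π) :
    ∃ a < n - 2, ∀ i : Fin n, IsSuffixMin π i ↔ (i : ℕ) = a ∨ n - 2 ≤ i := by
  obtain ⟨f, hf, huniq⟩ := h
  obtain ⟨hf, h0, h1⟩ := (isOcc_p123_iff_isSuffixMin hS).1 hf
  have hocc : ∀ {i j k : Fin n}, i < j → j < k → IsSuffixMin π i → IsSuffixMin π j →
      ![i, j, k] = f := fun hij hjk hi hj =>
    huniq _ ((isOcc_p123_iff_isSuffixMin hS).2 ⟨strictMono_vec3_iff.2 ⟨hij, hjk⟩, hi, hj⟩)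
  have h01 : f 0 < f 1 := hf (by decide)
  have h12 : f 1 < f 2 := hf (by decide)
  have h2n := (f 2).isLt
  have hafter : ∀ k, f 1 < k → k = f 2 := fun k hk => by
    simpa using congrFun (hocc h01 hk h0 h1) 2
  have hf1 : (f 1 : ℕ) = n - 2 := by
    have hlast := hafter ⟨n - 1, by omega⟩ (Fin.lt_def.2 (show (f 1 : ℕ) < n - 1 by omega))
    have hsucc := hafter ⟨f 1 + 1, by omega⟩ (Fin.lt_def.2 (by simp))
    simp only [Fin.ext_iff] at hlast hsucc
    omega
  refine ⟨f 0, by omega, fun i => ⟨fun hi => ?_, ?_⟩⟩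
  · by_contra! hne
    rcases lt_trichotomy i (f 0) with hi0 | rfl | h0i
    · exact hi0.ne (by simpa using congrFun (hocc hi0 h01 hi h0) 0)
    · exact hne.1 rfl
    · have hi1 : i < f 1 := Fin.lt_def.2 (by omega)
      exact hi1.ne (by simpa using congrFun (hocc h0i hi1 h0 hi) 1)
  · rintro (hi | hi)
    · rwa [← Fin.ext hi] at h0
    · obtain rfl | hi : i = f 1 ∨ (i : ℕ) = n - 1 := by omega
      · exact h1
      · exact fun j hij => absurd j.isLt (by omega)

lemma containsOnce_p123_of_isSuffixMin_iff (hS : ∀ i, IsSuffixMin π i ∨ IsSuffixMax π i)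
    {a : ℕ} (ha : a < n - 2) (h : ∀ i : Fin n, IsSuffixMin π i ↔ (i : ℕ) = a ∨ n - 2 ≤ i) :
    ContainsOnce p123 π := by
  refine ⟨![⟨a, by omega⟩, ⟨n - 2, by omega⟩, ⟨n - 1, by omega⟩],
    (isOcc_p123_iff_isSuffixMin hS).2 ⟨strictMono_vec3_iff.2 ⟨?_, ?_⟩, (h _).2 ?_, (h _).2 ?_⟩,
    fun f hf => ?_⟩
  · exact Fin.mk_lt_mk.2 (by omega)
  · exact Fin.mk_lt_mk.2 (by omega)
  · exact Or.inl rfl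
  · exact Or.inr le_rfl
  obtain ⟨hf, h0, h1⟩ := (isOcc_p123_iff_isSuffixMin hS).1 hf
  have h01 : (f 0 : ℕ) < f 1 := hf (by decide)
  have h12 : (f 1 : ℕ) < f 2 := hf (by decide)
  have h2n := (f 2).isLt
  rw [h] at h0 h1
  ext i
  fin_cases i <;>
    simp only [Fin.zero_eta, Fin.mk_one, Fin.reduceFinMk, Matrix.cons_val_zero,
      Matrix.cons_val_one, Matrix.cons_val] <;> omega

end SuffixExtrema

section Witness

variable {n a : ℕ}

def occOnceWitnessVal (n a i : ℕ) : ℕ :=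
  if i = a then 0 else if n - 2 ≤ i then i + 3 - n else if i < a then n - 1 - i else n - i

/-- The permutation `(n-1) (n-2) ⋯ (n-a) 0 (n-a-1) ⋯ 3 1 2`, whose suffix minima sit exactly at
positions `a`, `n - 2` and `n - 1`; the `% n` only makes the definition total. -/
def occOnceWitness (n a : ℕ) (i : Fin n) : Fin n :=
  ⟨occOnceWitnessVal n a i % n, Nat.mod_lt _ i.pos⟩

lemma occOnceWitness_val (ha : a < n - 2) (i : Fin n) :
    (occOnceWitness n a i : ℕ) = occOnceWitnessVal n a i := by
  have hi := i.isLt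
  refine Nat.mod_eq_of_lt ?_
  unfold occOnceWitnessVal
  split_ifs <;> omega

lemma injective_occOnceWitness (ha : a < n - 2) : Injective (occOnceWitness n a) := by
  intro i j hij
  have hval := congrArg Fin.val hij
  rw [occOnceWitness_val ha, occOnceWitness_val ha] at hval
  have := i.isLt
  have := j.isLt
  unfold occOnceWitnessVal at hval
  ext
  split_ifs at hval <;> omega

lemma isSuffixMin_occOnceWitness (ha : a < n - 2) {i : Fin n} (hi : (i : ℕ) = a ∨ n - 2 ≤ i) :
    IsSuffixMin (occOnceWitness n a) i := by
  intro j hij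
  rw [Fin.lt_def] at hij ⊢
  rw [occOnceWitness_val ha, occOnceWitness_val ha]
  have := j.isLt
  unfold occOnceWitnessVal
  split_ifs <;> omega

lemma isSuffixMax_occOnceWitness (ha : a < n - 2) {i : Fin n}
    (hi : ¬ ((i : ℕ) = a ∨ n - 2 ≤ i)) : IsSuffixMax (occOnceWitness n a) i := by
  intro j hij
  rw [Fin.lt_def] at hij ⊢
  rw [occOnceWitness_val ha, occOnceWitness_val ha]
  have := j.isLt
  unfold occOnceWitnessVal
  split_ifs <;> omega

lemma isSuffixMin_occOnceWitness_iff (ha : a < n - 2) (i : Fin n) :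
    IsSuffixMin (occOnceWitness n a) i ↔ (i : ℕ) = a ∨ n - 2 ≤ i := by
  refine ⟨fun hmin => ?_, isSuffixMin_occOnceWitness ha⟩
  by_contra hi
  have hlast : i < ⟨n - 1, by omega⟩ := Fin.lt_def.2 (show (i : ℕ) < n - 1 by omega)
  exact lt_asymm (hmin _ hlast) (isSuffixMax_occOnceWitness ha hi _ hlast)

lemma isSuffixMin_or_isSuffixMax_occOnceWitness (ha : a < n - 2) (i : Fin n) :
    IsSuffixMin (occOnceWitness n a) i ∨ IsSuffixMax (occOnceWitness n a) i := by
  by_cases hi : (i : ℕ) = a ∨ n - 2 ≤ i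
  · exact Or.inl (isSuffixMin_occOnceWitness ha hi)
  · exact Or.inr (isSuffixMax_occOnceWitness ha hi)

end Witness

lemma card_containsOnce_p123 (n : ℕ) :
    Nat.card {π : Fin n → Fin n // Bijective π ∧
        Avoids p213 π ∧ Avoids p231 π ∧ ContainsOnce p123 π} = n - 2 := by
  have hmem (a : Fin (n - 2)) : Bijective (occOnceWitness n a) ∧
      Avoids p213 (occOnceWitness n a) ∧ Avoids p231 (occOnceWitness n a) ∧
      ContainsOnce p123 (occOnceWitness n a) := by
    have hS := isSuffixMin_or_isSuffixMax_occOnceWitness a.isLt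
    have hinj := injective_occOnceWitness a.isLt
    exact ⟨Finite.injective_iff_bijective.1 hinj, and_assoc.1
      ⟨(avoids_p213_and_avoids_p231_iff hinj).2 hS,
        containsOnce_p123_of_isSuffixMin_iff hS a.isLt (isSuffixMin_occOnceWitness_iff a.isLt)⟩⟩
  refine (Nat.card_eq_of_bijective (fun a => ⟨occOnceWitness n a, hmem a⟩) ⟨?_, ?_⟩).symm.trans
    (Nat.card_fin _)
  · intro a b hab
    have hmin := isSuffixMin_occOnceWitness a.isLt (i := ⟨a, by omega⟩) (Or.inl rfl)
    have hab' : occOnceWitness n a = occOnceWitness n b := congrArg Subtype.val hab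
    rw [hab', isSuffixMin_occOnceWitness_iff b.isLt] at hmin
    exact Fin.ext (hmin.resolve_right (show ¬ n - 2 ≤ (a : ℕ) by omega))
  · rintro ⟨π, hπ, h213, h231, h123⟩
    have hS := (avoids_p213_and_avoids_p231_iff hπ.injective).1 ⟨h213, h231⟩
    obtain ⟨a, ha, hmin⟩ := exists_isSuffixMin_iff_of_containsOnce_p123 hS h123
    refine ⟨⟨a, ha⟩, Subtype.ext (eq_of_isSuffixMin_iff (hmem ⟨a, ha⟩).1
      (isSuffixMin_or_isSuffixMax_occOnceWitness ha) hS fun i => ?_)⟩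
    rw [hmin, isSuffixMin_occOnceWitness_iff ha]

lemma card_containsOnce_p321_eq (n : ℕ) :
    Nat.card {π : Fin n → Fin n // Bijective π ∧
        Avoids p213 π ∧ Avoids p231 π ∧ ContainsOnce p321 π} =
    Nat.card {π : Fin n → Fin n // Bijective π ∧
        Avoids p213 π ∧ Avoids p231 π ∧ ContainsOnce p123 π} := by
  refine Nat.card_congr (Equiv.subtypeEquiv
    ⟨(Fin.rev ∘ ·), (Fin.rev ∘ ·), fun π => by ext; simp, fun π => by ext; simp⟩ fun π => ?_)
  simp only [Equiv.coe_fn_mk, Bijective.of_comp_iff' Fin.rev_bijective,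
    avoids_rev_comp_iff, containsOnce_rev_comp_iff, rev_comp_p123, rev_comp_p213, rev_comp_p231]
  exact and_congr_right' and_left_comm

theorem stmt15_general (n : ℕ) :
    Nat.card {π : Fin n → Fin n // Function.Bijective π ∧
        Avoids p213 π ∧ Avoids p231 π ∧ ContainsOnce p123 π} = n - 2 ∧
    Nat.card {π : Fin n → Fin n // Function.Bijective π ∧
        Avoids p213 π ∧ Avoids p231 π ∧ ContainsOnce p321 π} = n - 2 :=
  ⟨card_containsOnce_p123 n, (card_containsOnce_p321_eq n).trans (card_containsOnce_p123 n)⟩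

/-- for `n ≥ 3`, `|Sₙ(213,231; 123)| = n − 2`, and the same holds for the
pattern `321`. -/
theorem stmt15 (n : ℕ) (hn : 3 ≤ n) :
    Nat.card {π : Fin n → Fin n // Function.Bijective π ∧
        Avoids p213 π ∧ Avoids p231 π ∧ ContainsOnce p123 π} = n - 2 ∧
    Nat.card {π : Fin n → Fin n // Function.Bijective π ∧
        Avoids p213 π ∧ Avoids p231 π ∧ ContainsOnce p321 π} = n - 2 :=
  stmt15_general n
end

section
/- The number of permutations of length n avoiding 123, 132 and 231 and containing the decreasing pattern (k, k−1, …, 1) exactly once is 1 if n = k, k−1 if n = k+1, and 0 otherwise. -/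
-- spacing lemma
lemma smono_le {k n : ℕ} {f : Fin k → Fin n} (hf : StrictMono f) :
    ∀ i j : Fin k, (i:ℕ) ≤ (j:ℕ) → (f i : ℕ) + ((j:ℕ) - (i:ℕ)) ≤ (f j : ℕ) := by
  suffices h : ∀ d (i j : Fin k), (j:ℕ) = (i:ℕ) + d → (f i : ℕ) + d ≤ (f j : ℕ) by
    intro i j hij
    have := h ((j:ℕ) - (i:ℕ)) i j (by omega)
    omega
  intro d
  induction d with
  | zero => intro i j hij; have : i = j := Fin.ext (by omega); subst this; omega
  | succ d ih =>
    intro i j hij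
    have hj' : (i:ℕ) + d < k := by have := j.isLt; omega
    have h1 := ih i ⟨(i:ℕ) + d, hj'⟩ (by simp)
    have h2 : f ⟨(i:ℕ) + d, hj'⟩ < f j := hf (by simp [Fin.lt_def]; omega)
    have := Fin.lt_def.mp h2
    simp at h1 ⊢
    omega

lemma smono_le' {k n : ℕ} {f : Fin k → Fin n} (hf : StrictMono f) (i : Fin k) :
    (i:ℕ) ≤ (f i : ℕ) := by
  have h := smono_le hf ⟨0, i.pos⟩ i (by simp)
  simp at h
  omega

lemma smono_id {n : ℕ} {f : Fin n → Fin n} (hf : StrictMono f) : ∀ i, f i = i := by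
  intro i
  have h1 := smono_le' hf i
  have hlast : (n:ℕ) - 1 < n := by have := i.pos; omega
  have h2 := smono_le hf i ⟨n-1, hlast⟩ (by simp; omega)
  have := (f ⟨n-1, hlast⟩).isLt
  have := i.isLt
  exact Fin.ext (by simp at h2; omega)

-- occurrence of rev characterization
lemma isOcc_rev_iff {k n : ℕ} (π : Fin n → Fin n) (f : Fin k → Fin n) :
    IsOcc (Fin.rev : Fin k → Fin k) π f ↔
      StrictMono f ∧ ∀ i j : Fin k, i < j → π (f j) < π (f i) := by
  constructor
  · rintro ⟨hm, hiff⟩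
    exact ⟨hm, fun i j hij => (hiff j i).mp (by rwa [Fin.rev_lt_rev])⟩
  · rintro ⟨hm, ha⟩
    refine ⟨hm, fun i j => ?_⟩
    rw [Fin.rev_lt_rev]
    constructor
    · exact fun h => ha j i h
    · intro h
      rcases lt_trichotomy i j with h' | h' | h'
      · exact absurd (ha i j h') (by exact fun hh => absurd h (asymm hh))
      · subst h'; exact absurd h (lt_irrefl _)
      · exact h'

def AlmostDec {n : ℕ} (π : Fin n → Fin n) : Prop :=
  ∀ i j : Fin n, i < j → (j:ℕ) < n - 1 → π j < π i

lemma avoids_of_almostDec {n : ℕ} {π : Fin n → Fin n} (h : AlmostDec π)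
    {τ : Fin 3 → Fin 3} (hτ : τ 0 < τ 1) : Avoids τ π := by
  rintro ⟨f, hm, hiff⟩
  have h01 : f 0 < f 1 := hm (by decide)
  have h12 : f 1 < f 2 := hm (by decide)
  have hlt : ((f 1 : Fin n) : ℕ) < n - 1 := by
    have := Fin.lt_def.mp h12
    have := (f 2).isLt
    omega
  have := h (f 0) (f 1) h01 hlt
  have := (hiff 0 1).mp hτ
  exact absurd this (asymm ‹π (f 1) < π (f 0)›)

lemma isOcc_of {k n : ℕ} {τ : Fin k → Fin k} {π : Fin n → Fin n} {f : Fin k → Fin n}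
    (hm : StrictMono f) (hτ : Function.Injective τ)
    (h : ∀ a b, τ a < τ b → π (f a) < π (f b)) : IsOcc τ π f := by
  refine ⟨hm, fun a b => ⟨h a b, fun hab => ?_⟩⟩
  rcases lt_trichotomy (τ a) (τ b) with h' | h' | h'
  · exact h'
  · have : a = b := hτ h'
    subst this; exact absurd hab (lt_irrefl _)
  · exact absurd hab (asymm (h b a h'))

lemma almostDec_of_avoids {n : ℕ} {π : Fin n → Fin n} (hinj : Function.Injective π)
    (h1 : Avoids p123 π) (h2 : Avoids p132 π) (h3 : Avoids p231 π) : AlmostDec π := by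
  intro i j hij hj
  by_contra hc
  have hne : π i ≠ π j := fun h => absurd (hinj h) (Fin.ne_of_lt hij)
  have hπ : π i < π j := by
    rcases lt_trichotomy (π i) (π j) with h | h | h
    · exact h
    · exact absurd h hne
    · exact absurd h hc
  set L : Fin n := ⟨n - 1, by have := j.isLt; omega⟩ with hL
  have hjL : j < L := by rw [Fin.lt_def]; exact hj
  have hiL : i < L := lt_trans hij hjL
  have hmono : StrictMono ![i, j, L] := by
    intro a b hab
    fin_cases a <;> fin_cases b <;> simp_all <;>
      first | exact hij | exact hjL | exact hiL
  have hLi : π L ≠ π i := fun h => absurd (hinj h) (Fin.ne_of_gt hiL)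
  have hLj : π L ≠ π j := fun h => absurd (hinj h) (Fin.ne_of_gt hjL)
  rcases lt_trichotomy (π L) (π i) with hcase | hcase | hcase
  · -- π L < π i < π j : pattern 231
    refine h3 ⟨![i, j, L], isOcc_of hmono (by decide) ?_⟩
    intro a b hab
    fin_cases a <;> fin_cases b <;>
      simp [p231] at hab ⊢ <;>
      first | exact hπ | exact hcase | exact lt_trans hcase hπ
  · exact absurd hcase hLi
  · rcases lt_trichotomy (π L) (π j) with hcase2 | hcase2 | hcase2
    · -- π i < π L < π j : pattern 132
      refine h2 ⟨![i, j, L], isOcc_of hmono (by decide) ?_⟩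
      intro a b hab
      fin_cases a <;> fin_cases b <;>
        simp [p132] at hab ⊢ <;>
        first | exact hπ | exact hcase | exact hcase2
    · exact absurd hcase2 hLj
    · -- π i < π j < π L : pattern 123
      refine h1 ⟨![i, j, L], isOcc_of hmono (by decide) ?_⟩
      intro a b hab
      fin_cases a <;> fin_cases b <;>
        simp [p123] at hab ⊢ <;>
        first | exact hπ | exact hcase2 | exact lt_trans hπ hcase2

lemma in_set_iff_rev {k : ℕ} (π : Fin k → Fin k) :
    (Function.Bijective π ∧ Avoids p123 π ∧ Avoids p132 π ∧ Avoids p231 π ∧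
      ContainsOnce (Fin.rev : Fin k → Fin k) π) ↔ π = Fin.rev := by
  constructor
  · rintro ⟨-, -, -, -, f, hf, -⟩
    rw [isOcc_rev_iff] at hf
    obtain ⟨hm, ha⟩ := hf
    have hfid : ∀ i, f i = i := smono_id hm
    have hanti : ∀ i j : Fin k, i < j → π j < π i := by
      intro i j hij
      have := ha i j hij
      rwa [hfid, hfid] at this
    have hcomp : StrictMono (fun i => π (Fin.rev i)) := by
      intro i j hij
      exact hanti _ _ (Fin.rev_lt_rev.mpr hij)
    have := smono_id hcomp
    funext x
    have h2 := this (Fin.rev x)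
    simpa using h2
  · rintro rfl
    have hAD : AlmostDec (Fin.rev : Fin k → Fin k) :=
      fun i j hij _ => Fin.rev_lt_rev.mpr hij
    refine ⟨Fin.rev_involutive.bijective, avoids_of_almostDec hAD (by decide),
      avoids_of_almostDec hAD (by decide), avoids_of_almostDec hAD (by decide), ?_⟩
    refine ⟨id, (isOcc_rev_iff _ _).mpr ⟨strictMono_id, fun i j h => Fin.rev_lt_rev.mpr h⟩, ?_⟩
    intro g hg
    funext i
    exact smono_id hg.1 i

lemma no_co_small {k n : ℕ} (h : n < k) (π : Fin n → Fin n) :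
    ¬ ContainsOnce (Fin.rev : Fin k → Fin k) π := by
  rintro ⟨f, ⟨hm, -⟩, -⟩
  have := Fintype.card_le_of_injective f hm.injective
  simp at this
  omega

lemma no_co_k1 {n : ℕ} (h : 2 ≤ n) (π : Fin n → Fin n) :
    ¬ ContainsOnce (Fin.rev : Fin 1 → Fin 1) π := by
  rintro ⟨f, -, huniq⟩
  have hocc : ∀ c : Fin n, IsOcc (Fin.rev : Fin 1 → Fin 1) π (fun _ => c) := by
    intro c
    refine ⟨fun a b hab => absurd hab (by omega), fun i j => ?_⟩
    have : i = j := Subsingleton.elim i j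
    subst this
    simp
  have h0 := huniq (fun _ => (⟨0, by omega⟩ : Fin n)) (hocc _)
  have h1 := huniq (fun _ => (⟨1, by omega⟩ : Fin n)) (hocc _)
  have := congrFun (h0.trans h1.symm) ⟨0, by omega⟩
  simp at this

lemma no_co_big {k n : ℕ} (hk : 1 ≤ k) (h : k + 2 ≤ n) {π : Fin n → Fin n}
    (hAD : AlmostDec π) : ¬ ContainsOnce (Fin.rev : Fin k → Fin k) π := by
  rintro ⟨f, -, huniq⟩
  set f1 : Fin k → Fin n := fun i => ⟨i.val, by have := i.isLt; omega⟩ with hf1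
  set f2 : Fin k → Fin n := fun i =>
    if i.val = k - 1 then ⟨k, by omega⟩ else ⟨i.val, by have := i.isLt; omega⟩ with hf2
  have hocc1 : IsOcc (Fin.rev : Fin k → Fin k) π f1 := by
    rw [isOcc_rev_iff]
    constructor
    · intro a b hab; exact hab
    · intro i j hij
      refine hAD _ _ hij ?_
      show (j : ℕ) < n - 1
      have := j.isLt; omega
  have hocc2 : IsOcc (Fin.rev : Fin k → Fin k) π f2 := by
    rw [isOcc_rev_iff]
    have hval : ∀ i : Fin k, (f2 i).val = if i.val = k - 1 then k else i.val := by
      intro i; simp [hf2]; split <;> rfl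
    constructor
    · intro a b hab
      rw [Fin.lt_def, hval, hval]
      have ha := a.isLt; have hb := b.isLt
      have := Fin.lt_def.mp hab
      split <;> split <;> omega
    · intro i j hij
      refine hAD _ _ ?_ ?_
      · rw [Fin.lt_def, hval, hval]
        have ha := i.isLt; have hb := j.isLt
        have := Fin.lt_def.mp hij
        split <;> split <;> omega
      · rw [hval]
        have := j.isLt
        split <;> omega
  have := (huniq f1 hocc1).trans (huniq f2 hocc2).symm
  have := congrFun this ⟨k - 1, by omega⟩
  simp [hf1, hf2, Fin.ext_iff] at this
  omega

def sig (k : ℕ) (m : Fin (k+1)) : Fin (k+1) → Fin (k+1) := fun i =>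
  if (i:ℕ) = k then m
  else if (i:ℕ) < k - (m:ℕ) then ⟨k - (i:ℕ), by omega⟩ else ⟨k - (i:ℕ) - 1, by omega⟩

lemma sig_val (k : ℕ) (m : Fin (k+1)) (i : Fin (k+1)) :
    (sig k m i : ℕ) = if (i:ℕ) = k then (m:ℕ)
      else if (i:ℕ) < k - (m:ℕ) then k - (i:ℕ) else k - (i:ℕ) - 1 := by
  unfold sig
  split <;> [rfl; skip]
  split <;> rfl

lemma sig_inj (k : ℕ) (m : Fin (k+1)) : Function.Injective (sig k m) := by
  intro i j h
  have h' : (sig k m i : ℕ) = (sig k m j : ℕ) := congrArg Fin.val h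
  rw [sig_val, sig_val] at h'
  have hi := i.isLt; have hj := j.isLt; have hm := m.isLt
  apply Fin.ext
  split_ifs at h' <;> omega

lemma sig_AD (k : ℕ) (m : Fin (k+1)) : AlmostDec (sig k m) := by
  intro i j hij hj
  have hij' : (i:ℕ) < (j:ℕ) := hij
  have hj' : (j:ℕ) < k := by simpa using hj
  rw [Fin.lt_def, sig_val, sig_val]
  have hm := m.isLt
  split_ifs <;> omega

lemma sig_last (k : ℕ) (m : Fin (k+1)) : sig k m ⟨k, by omega⟩ = m := by
  apply Fin.ext
  rw [sig_val]
  simp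

lemma sig_co (k : ℕ) (hk : 2 ≤ k) (m : Fin (k+1)) (hm : 2 ≤ (m:ℕ)) :
    ContainsOnce (Fin.rev : Fin k → Fin k) (sig k m) := by
  have hx1 : k - 1 < k := by omega
  have hx2 : k - 2 < k := by omega
  refine ⟨fun i => ⟨i.val, by have := i.isLt; omega⟩, ?_, ?_⟩
  · show IsOcc (Fin.rev : Fin k → Fin k) (sig k m) _
    rw [isOcc_rev_iff]
    refine ⟨fun a b hab => hab, fun i j hij => ?_⟩
    refine sig_AD k m _ _ hij ?_
    show (j:ℕ) < (k+1) - 1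
    have := j.isLt; omega
  · intro g hg
    rw [isOcc_rev_iff] at hg
    obtain ⟨hm', ha⟩ := hg
    have hgl : (g ⟨k-1, hx1⟩ : ℕ) ≤ k := by have := (g ⟨k-1, hx1⟩).isLt; omega
    have hgl' : k - 1 ≤ (g ⟨k-1, hx1⟩ : ℕ) := smono_le' hm' ⟨k-1, hx1⟩
    rcases Nat.lt_or_ge (g ⟨k-1, hx1⟩ : ℕ) k with hcase | hcase
    · -- g (k-1) has value k-1, so g = f0
      funext i
      apply Fin.ext
      show (g i : ℕ) = (i : ℕ)
      have h1 := smono_le' hm' i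
      have h2 : (g i : ℕ) + ((k-1) - (i:ℕ)) ≤ (g ⟨k-1, hx1⟩ : ℕ) :=
        smono_le hm' i ⟨k-1, hx1⟩ (by show (i:ℕ) ≤ k - 1; have := i.isLt; omega)
      have := i.isLt
      omega
    · -- g (k-1) = k : contradiction using index k-2
      exfalso
      have hgk : (g ⟨k-1, hx1⟩ : ℕ) = k := by omega
      have hi2l : (⟨k-2, hx2⟩ : Fin k) < ⟨k-1, hx1⟩ := by
        rw [Fin.lt_def]; show k - 2 < k - 1; omega
      have hb1 : k - 2 ≤ (g ⟨k-2, hx2⟩ : ℕ) := smono_le' hm' ⟨k-2, hx2⟩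
      have hb2 : (g ⟨k-2, hx2⟩ : ℕ) < k := by
        have := Fin.lt_def.mp (hm' hi2l); omega
      have hocc := Fin.lt_def.mp (ha _ _ hi2l)
      have hv1 : (sig k m (g ⟨k-1, hx1⟩) : ℕ) = (m:ℕ) := by rw [sig_val, if_pos hgk]
      have hv2 : (sig k m (g ⟨k-2, hx2⟩) : ℕ) ≤ 1 := by
        rw [sig_val]
        have hmk := m.isLt
        split_ifs <;> omega
      omega

lemma mem_last_ge_two {k : ℕ} (hk : 2 ≤ k) {π : Fin (k+1) → Fin (k+1)}
    (hinj : Function.Injective π) (hAD : AlmostDec π)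
    (hco : ContainsOnce (Fin.rev : Fin k → Fin k) π) :
    2 ≤ (π ⟨k, by omega⟩ : ℕ) := by
  have hK : k < k + 1 := by omega
  have hK1 : k - 1 < k + 1 := by omega
  have hK2 : k - 2 < k + 1 := by omega
  show 2 ≤ (π ⟨k, hK⟩ : ℕ)
  by_contra hm
  push_neg at hm
  obtain ⟨f, -, huniq⟩ := hco
  have hADk : ∀ i j : Fin (k+1), (i:ℕ) < (j:ℕ) → (j:ℕ) < k → π j < π i := by
    intro i j hij hj
    exact hAD i j hij (by show (j:ℕ) < (k+1) - 1; omega)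
  have hkey : ∀ i : Fin (k+1), (i:ℕ) ≤ k - 2 → (π ⟨k, hK⟩ : ℕ) < (π i : ℕ) := by
    intro i hi
    have hne : (π i : ℕ) ≠ (π ⟨k, hK⟩ : ℕ) := by
      intro h
      have h2 := hinj (Fin.ext h)
      have := congrArg Fin.val h2
      simp only [] at this
      omega
    have h1 : (π ⟨k-1, hK1⟩ : ℕ) < (π ⟨k-2, hK2⟩ : ℕ) :=
      hADk ⟨k-2, hK2⟩ ⟨k-1, hK1⟩ (by show k-2 < k-1; omega) (by show k-1 < k; omega)
    have h2 : (π ⟨k-2, hK2⟩ : ℕ) ≤ (π i : ℕ) := by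
      rcases Nat.lt_or_ge (i:ℕ) (k-2) with h | h
      · exact le_of_lt (hADk i ⟨k-2, hK2⟩ h (by show k-2 < k; omega))
      · have : i = ⟨k-2, hK2⟩ := Fin.ext (by show (i:ℕ) = k - 2; omega)
        rw [this]
    omega
  have hocc0 : IsOcc (Fin.rev : Fin k → Fin k) π
      (fun i => ⟨i.val, by have := i.isLt; omega⟩) := by
    rw [isOcc_rev_iff]
    refine ⟨fun a b hab => hab, fun i j hij => ?_⟩
    refine hAD _ _ hij ?_
    show (j:ℕ) < (k+1) - 1
    have := j.isLt; omega
  have hocc1 : IsOcc (Fin.rev : Fin k → Fin k) π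
      (fun i => if i.val = k - 1 then ⟨k, hK⟩
        else ⟨i.val, by have := i.isLt; omega⟩) := by
    rw [isOcc_rev_iff]
    have hval : ∀ i : Fin k, ((if i.val = k - 1 then (⟨k, hK⟩ : Fin (k+1))
        else ⟨i.val, by have := i.isLt; omega⟩) : Fin (k+1)).val =
        if i.val = k - 1 then k else i.val := by
      intro i; split <;> simp_all
    constructor
    · intro a b hab
      rw [Fin.lt_def, hval, hval]
      have := a.isLt; have := b.isLt
      have := Fin.lt_def.mp hab
      split <;> split <;> omega
    · intro i j hij
      have hij' : (i:ℕ) < (j:ℕ) := hij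
      have hik := i.isLt; have hjk := j.isLt
      have hine : ¬ (i.val = k - 1) := by omega
      simp only [if_neg hine]
      by_cases hj : (j:ℕ) = k - 1
      · simp only [if_pos hj]
        rw [Fin.lt_def]
        exact hkey ⟨i.val, by omega⟩ (by show (i:ℕ) ≤ k - 2; omega)
      · simp only [if_neg hj]
        exact hADk _ _ hij' (by show (j:ℕ) < k; omega)
  have heq := (huniq _ hocc0).trans (huniq _ hocc1).symm
  have heq2 := congrFun heq ⟨k - 1, by omega⟩
  have hval2 := congrArg Fin.val heq2
  rw [if_pos rfl] at hval2
  simp only [Fin.val_mk] at hval2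
  omega

lemma eq_of_AD_last {k : ℕ} {π π' : Fin (k+1) → Fin (k+1)}
    (hb : Function.Bijective π) (hb' : Function.Bijective π')
    (hAD : AlmostDec π) (hAD' : AlmostDec π')
    (hlast : π ⟨k, by omega⟩ = π' ⟨k, by omega⟩) : π = π' := by
  have hK : k < k + 1 := by omega
  have hlast' : π ⟨k, hK⟩ = π' ⟨k, hK⟩ := hlast
  rcases Nat.eq_zero_or_pos k with rfl | hk
  · funext i
    have : i = ⟨0, hK⟩ := Fin.ext (by omega)
    rw [this]; exact hlast'
  have hmono : ∀ (ρ : Fin (k+1) → Fin (k+1)), AlmostDec ρ →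
      StrictMono (fun i : Fin k => ρ ⟨k - 1 - i.val, by omega⟩) := by
    intro ρ hADρ i j hij
    have hij' : (i:ℕ) < (j:ℕ) := hij
    have := i.isLt; have := j.isLt
    exact hADρ ⟨k - 1 - j.val, by omega⟩ ⟨k - 1 - i.val, by omega⟩
      (by show k - 1 - j.val < k - 1 - i.val; omega)
      (by show k - 1 - i.val < (k+1) - 1; omega)
  have hrange : ∀ (ρ : Fin (k+1) → Fin (k+1)), Function.Bijective ρ →
      Set.range (fun i : Fin k => ρ ⟨k - 1 - i.val, by omega⟩) = {x | x ≠ ρ ⟨k, hK⟩} := by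
    intro ρ hbρ
    ext x
    simp only [Set.mem_range, Set.mem_setOf_eq]
    constructor
    · rintro ⟨i, rfl⟩
      intro h
      have h2 := hbρ.injective h
      have := congrArg Fin.val h2
      simp only [] at this
      have := i.isLt
      omega
    · intro hx
      obtain ⟨y, rfl⟩ := hbρ.surjective x
      have hy : y ≠ ⟨k, hK⟩ := fun h => hx (congrArg ρ h)
      have hyv : (y:ℕ) < k := by
        have h3 := y.isLt
        have : (y:ℕ) ≠ k := fun h => hy (Fin.ext h)
        omega
      refine ⟨⟨k - 1 - y.val, by omega⟩, ?_⟩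
      congr 1
      apply Fin.ext
      show k - 1 - (k - 1 - y.val) = (y:ℕ)
      omega
  haveI : WellFoundedLT (Fin k) := inferInstance
  have hGeq : (fun i : Fin k => π ⟨k - 1 - i.val, by omega⟩) =
      (fun i : Fin k => π' ⟨k - 1 - i.val, by omega⟩) := by
    have h1 := hmono π hAD
    have h2 := hmono π' hAD'
    exact (StrictMono.range_inj h1 h2).mp
      (by rw [hrange π hb, hrange π' hb', hlast'])
  funext i
  by_cases h : (i:ℕ) = k
  · have : i = ⟨k, hK⟩ := Fin.ext h
    rw [this]; exact hlast'
  · have hi : (i:ℕ) < k := by have := i.isLt; omega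
    have h4 := congrFun hGeq ⟨k - 1 - i.val, by omega⟩
    simp only [] at h4
    have harg : (⟨k - 1 - (k - 1 - i.val), by omega⟩ : Fin (k+1)) = i := by
      apply Fin.ext
      show k - 1 - (k - 1 - i.val) = (i:ℕ)
      omega
    rwa [harg] at h4

/-- for `k ≥ 1`, `|Sₙ(123,132,231; (k,k−1,…,1))|` is `1` if `n = k`,
`k − 1` if `n = k + 1`, and `0` otherwise. -/
theorem stmt17 (k : ℕ) (hk : 1 ≤ k) (n : ℕ) :
    Nat.card {π : Fin n → Fin n // Function.Bijective π ∧
      Avoids p123 π ∧ Avoids p132 π ∧ Avoids p231 π ∧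
      ContainsOnce (Fin.rev : Fin k → Fin k) π} =
      if n = k then 1 else if n = k + 1 then k - 1 else 0 := by
  by_cases h1 : n = k
  · subst h1
    rw [if_pos rfl, Nat.card_congr (Equiv.subtypeEquivRight fun π => in_set_iff_rev π)]
    haveI : Unique {π : Fin n → Fin n // π = Fin.rev} :=
      ⟨⟨⟨Fin.rev, rfl⟩⟩, fun x => Subtype.ext x.2⟩
    exact Nat.card_unique
  · rw [if_neg h1]
    by_cases h2 : n = k + 1
    · subst h2
      rw [if_pos rfl]
      rcases Nat.lt_or_ge k 2 with hk2 | hk2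
      · have hk1 : k = 1 := by omega
        subst hk1
        haveI : IsEmpty {π : Fin 2 → Fin 2 // Function.Bijective π ∧
            Avoids p123 π ∧ Avoids p132 π ∧ Avoids p231 π ∧
            ContainsOnce (Fin.rev : Fin 1 → Fin 1) π} :=
          ⟨fun ⟨π, _, _, _, _, hco⟩ => no_co_k1 (by norm_num) π hco⟩
        rw [Nat.card_of_isEmpty]
      · have hK : k < k + 1 := by omega
        have e : {π : Fin (k+1) → Fin (k+1) // Function.Bijective π ∧
            Avoids p123 π ∧ Avoids p132 π ∧ Avoids p231 π ∧
            ContainsOnce (Fin.rev : Fin k → Fin k) π} ≃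
            {m : Fin (k+1) // 2 ≤ (m:ℕ)} := by
          refine ⟨fun π => ⟨π.1 ⟨k, hK⟩, ?_⟩,
            fun m => ⟨sig k m.1, ?_, ?_, ?_, ?_, sig_co k hk2 m.1 m.2⟩, ?_, ?_⟩
          · obtain ⟨π, hb, ha1, ha2, ha3, hco⟩ := π
            exact mem_last_ge_two hk2 hb.injective
              (almostDec_of_avoids hb.injective ha1 ha2 ha3) hco
          · exact Finite.injective_iff_bijective.mp (sig_inj k m.1)
          · exact avoids_of_almostDec (sig_AD k m.1) (by decide)
          · exact avoids_of_almostDec (sig_AD k m.1) (by decide)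
          · exact avoids_of_almostDec (sig_AD k m.1) (by decide)
          · rintro ⟨π, hb, ha1, ha2, ha3, hco⟩
            apply Subtype.ext
            show sig k (π ⟨k, hK⟩) = π
            exact eq_of_AD_last (Finite.injective_iff_bijective.mp (sig_inj k _)) hb
              (sig_AD k _) (almostDec_of_avoids hb.injective ha1 ha2 ha3)
              (sig_last k _)
          · rintro ⟨m, hm⟩
            apply Subtype.ext
            show sig k m ⟨k, hK⟩ = m
            exact sig_last k m
        have e2 : {m : Fin (k+1) // 2 ≤ (m:ℕ)} ≃ Fin (k-1) := by
          refine ⟨fun m => ⟨m.1.val - 2, by have := m.1.isLt; have := m.2; omega⟩,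
            fun i => ⟨⟨i.val + 2, by have := i.isLt; omega⟩, by simp⟩, ?_, ?_⟩
          · rintro ⟨m, hm⟩
            apply Subtype.ext
            apply Fin.ext
            show (m:ℕ) - 2 + 2 = (m:ℕ)
            omega
          · intro i
            apply Fin.ext
            show (i:ℕ) + 2 - 2 = (i:ℕ)
            omega
        rw [Nat.card_congr (e.trans e2), Nat.card_eq_fintype_card, Fintype.card_fin]
    · rw [if_neg h2]
      haveI : IsEmpty {π : Fin n → Fin n // Function.Bijective π ∧
          Avoids p123 π ∧ Avoids p132 π ∧ Avoids p231 π ∧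
          ContainsOnce (Fin.rev : Fin k → Fin k) π} := by
        refine ⟨fun ⟨π, hb, ha1, ha2, ha3, hco⟩ => ?_⟩
        rcases Nat.lt_or_ge n k with hc | hc
        · exact no_co_small hc π hco
        · have hn : k + 2 ≤ n := by omega
          exact no_co_big hk hn (almostDec_of_avoids hb.injective ha1 ha2 ha3) hco
      rw [Nat.card_of_isEmpty]
end
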